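/- arXiv:1101.0197 — 7 statements merged into one kernel-verified Lean document; each statement's English description precedes it below -/
import Mathlib

section
/- Let A be a commutative ring, n a positive integer, and ρ an (n+1)×n matrix with entries in A. Let Δ₀,…,Δₙ denote the ordered, signed n×n minors of ρ. Then every Koszul relation of (Δ₀,…,Δₙ), i.e., every vector of the form Δᵢ·eⱼ − Δⱼ·eᵢ ∈ A^{n+1}, lies in the image of the linear map ρ : Aⁿ → A^{n+1}. -/
/-- **Koszul–Hilbert lemma.** Let `A` be a commutative ring, `n` a positive integer and
`ρ` an `(n+1) × n` matrix over `A`.  Let `Δ i = (-1)^i · det(ρ with row i deleted)` be the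
ordered signed `n`-minors of `ρ`.  Then every Koszul relation `Δ i • e j - Δ j • e i` of the
tuple `(Δ 0, …, Δ n)` lies in the image of the linear map `ρ : Aⁿ → A^{n+1}`. -/
theorem koszul_relations_mem_image_of_maximal_minors
    (A : Type*) [CommRing A] (n : ℕ) (hn : 0 < n)
    (ρ : Matrix (Fin (n + 1)) (Fin n) A)
    (Δ : Fin (n + 1) → A)
    (hΔ : ∀ i, Δ i = (-1 : A) ^ (i : ℕ) * (ρ.submatrix i.succAbove id).det)
    (i j : Fin (n + 1)) :
    (fun l => Δ i * (if l = j then 1 else 0) - Δ j * (if l = i then 1 else 0))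
      ∈ LinearMap.range ρ.mulVecLin := by
  classical
  set M : Matrix (Fin (n + 1)) (Fin (n + 1)) A :=
    Matrix.of (fun l => Fin.cons (if l = i then (1 : A) else 0) (ρ l)) with hMdef
  have hM0 : ∀ l, M l 0 = if l = i then 1 else 0 := by
    intro l; simp [hMdef]
  have hMs : ∀ l k, M l (Fin.succ k) = ρ l k := by
    intro l k; simp [hMdef]
  have hsub : ∀ r : Fin (n + 1),
      M.submatrix r.succAbove Fin.succ = ρ.submatrix r.succAbove id := by
    intro r; ext l k; simp [Matrix.submatrix_apply, hMs]
  have hdet : M.det = Δ i := by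
    rw [Matrix.det_succ_column_zero, Fintype.sum_eq_single i ?_, hM0, if_pos rfl, mul_one,
      hsub, hΔ]
    intro l hl
    rw [hM0, if_neg hl]; ring
  have hadj : Matrix.adjugate M 0 j = Δ j := by
    rw [Matrix.adjugate_apply, Matrix.det_succ_row _ j,
      Fintype.sum_eq_single (0 : Fin (n + 1)) ?_]
    · have hsub2 : (M.updateRow j (Pi.single 0 1)).submatrix j.succAbove
          ((0 : Fin (n + 1)).succAbove) = ρ.submatrix j.succAbove id := by
        ext l k
        simp [Matrix.submatrix_apply, Matrix.updateRow_apply, Fin.succAbove_ne j l,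
          Fin.succAbove_zero, hMs]
      rw [hsub2, hΔ j]
      simp
    · intro k hk
      simp [Matrix.updateRow_self, Pi.single_apply, hk]
  have key : ∀ l, (∑ k, ρ l k * Matrix.adjugate M (Fin.succ k) j)
      = Δ i * (if l = j then 1 else 0) - Δ j * (if l = i then 1 else 0) := by
    intro l
    have hMA := congrFun (congrFun (Matrix.mul_adjugate M) l) j
    rw [Matrix.mul_apply, Fin.sum_univ_succ, hM0, hadj, hdet] at hMA
    simp only [Matrix.smul_apply, Matrix.one_apply, smul_eq_mul] at hMA
    have hrw : (∑ k : Fin n, M l (Fin.succ k) * Matrix.adjugate M (Fin.succ k) j)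
        = ∑ k : Fin n, ρ l k * Matrix.adjugate M (Fin.succ k) j := by
      simp [hMs]
    rw [hrw] at hMA
    rw [eq_sub_iff_add_eq, ← hMA]; ring
  exact ⟨fun k => Matrix.adjugate M (Fin.succ k) j, funext fun l => by
    simpa [Matrix.mulVecLin_apply, Matrix.mulVec, dotProduct] using key l⟩
end

section
/- Let D be a factorial Noetherian domain and let 𝒳 be the generic (n+1)×n matrix of indeterminates over D, i.e., with entries the (n+1)·n variables X_{i,j} of the polynomial ring D[X]. Then the ideal of D[X] generated by the n×n minors of 𝒳 has grade at least 2. -/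
open MvPolynomial Function Matrix
set_option linter.unusedSectionVars false

section Aux
variable {D : Type*} [CommRing D] [IsDomain D]

lemma gtm_mem_vars_iff {σ : Type*} {p : MvPolynomial σ D} {v : σ} :
    v ∈ p.vars ↔ degreeOf v p ≠ 0 := by
  classical
  rw [vars_def, degreeOf_def, Multiset.mem_toFinset, ← Multiset.count_ne_zero]

lemma gtm_degreeOf_dvd {σ : Type*} [Fintype σ] {d f : MvPolynomial σ D}
    (hdvd : d ∣ f) (hf : f ≠ 0) {v : σ} (hv : degreeOf v f = 0) : degreeOf v d = 0 := by
  classical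
  obtain ⟨e, rfl⟩ := hdvd
  have hd : d ≠ 0 := left_ne_zero_of_mul hf
  have he : e ≠ 0 := right_ne_zero_of_mul hf
  obtain ⟨N, hN⟩ : ∃ N, Fintype.card σ = N + 1 :=
    ⟨Fintype.card σ - 1, (Nat.succ_pred_eq_of_pos (Fintype.card_pos_iff.mpr ⟨v⟩)).symm⟩
  let e₁ : σ ≃ Fin (N + 1) := Fintype.equivFinOfCardEq hN
  let e₀ : σ ≃ Fin (N + 1) := e₁.trans (Equiv.swap (e₁ v) 0)
  have hev : e₀ v = 0 := by simp [e₀, Equiv.swap_apply_left]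
  have key : ∀ p : MvPolynomial σ D,
      degreeOf v p = (finSuccEquiv D N (renameEquiv D e₀ p)).natDegree := by
    intro p
    rw [natDegree_finSuccEquiv, renameEquiv_apply, ← hev,
      degreeOf_rename_of_injective e₀.injective v]
  have h2 : (finSuccEquiv D N (renameEquiv D e₀ (d * e))).natDegree = 0 := by
    rw [← key]; exact hv
  have hd' : finSuccEquiv D N (renameEquiv D e₀ d) ≠ 0 := by
    intro h0
    exact hd (by simpa using (renameEquiv D e₀).injective ((finSuccEquiv D N).injective
      (by simpa using h0)))
  have he' : finSuccEquiv D N (renameEquiv D e₀ e) ≠ 0 := by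
    intro h0
    exact he (by simpa using (renameEquiv D e₀).injective ((finSuccEquiv D N).injective
      (by simpa using h0)))
  rw [_root_.map_mul, _root_.map_mul, Polynomial.natDegree_mul hd' he'] at h2
  rw [key]
  omega

lemma gtm_notMem_vars_of_dvd {σ : Type*} [Fintype σ] {d f : MvPolynomial σ D}
    (hdvd : d ∣ f) (hf : f ≠ 0) {v : σ} (hv : v ∉ f.vars) : v ∉ d.vars := by
  rw [gtm_mem_vars_iff, not_not] at *
  exact gtm_degreeOf_dvd hdvd hf hv

lemma gtm_aeval_eq_self {σ : Type*} (g : σ → MvPolynomial σ D) (p : MvPolynomial σ D)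
    (h : ∀ i ∈ p.vars, g i = X i) : aeval g p = p := by
  have := hom_congr_vars (f₁ := ((aeval g : MvPolynomial σ D →ₐ[D] MvPolynomial σ D) :
      MvPolynomial σ D →+* MvPolynomial σ D)) (f₂ := RingHom.id _)
    (p₁ := p) (p₂ := p) ?_ ?_ rfl
  · simpa using this
  · ext x; simp
  · intro i hi _; simpa using h i hi

lemma gtm_det_mem_supported {σ : Type*} {m : ℕ} (S : Set σ)
    (M : Matrix (Fin m) (Fin m) (MvPolynomial σ D))
    (h : ∀ i j, M i j ∈ supported D S) : M.det ∈ supported D S := by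
  rw [Matrix.det_apply']
  exact Subalgebra.sum_mem _ fun s _ => Subalgebra.mul_mem _
    (Subalgebra.intCast_mem _ _) (Subalgebra.prod_mem _ fun i _ => h _ _)

lemma gtm_det_X_ne_zero {α β : Type*} [DecidableEq α] [DecidableEq β] {k : ℕ}
    (r : Fin k → α) (c : Fin k → β) (hr : Injective r) (hc : Injective c) :
    (Matrix.of fun i j => (X (r i, c j) : MvPolynomial (α × β) D)).det ≠ 0 := by
  classical
  intro h0
  have h1 := congrArg (aeval (R := D) (fun p : α × β =>
      if ∃ i, p = (r i, c i) then (1 : D) else 0)) h0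
  rw [map_zero, AlgHom.map_det] at h1
  have h2 : ((Matrix.of fun i j => (X (r i, c j) : MvPolynomial (α × β) D)).map
      (aeval fun p : α × β => if ∃ i, p = (r i, c i) then (1 : D) else 0)) = 1 := by
    ext i j
    simp only [Matrix.map_apply, Matrix.of_apply, aeval_X, Matrix.one_apply]
    by_cases hij : i = j
    · subst hij; rw [if_pos ⟨i, rfl⟩, if_pos rfl]
    · rw [if_neg, if_neg hij]
      rintro ⟨t, ht⟩
      rw [Prod.mk.injEq] at ht
      exact hij ((hr ht.1).trans (hc ht.2).symm)
  rw [AlgHom.mapMatrix_apply, h2, Matrix.det_one] at h1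
  exact one_ne_zero (α := D) h1
end Aux

lemma gtm_dvd_of_dvd_unit_mul {R : Type*} [CommMonoid R] {u x d : R}
    (hu : IsUnit u) (h : d ∣ u * x) : d ∣ x := by
  obtain ⟨v, rfl⟩ := hu
  simpa using h.mul_left (↑v⁻¹ : R)

set_option maxHeartbeats 1000000 in
lemma gtm_key {D : Type*} [CommRing D] [IsDomain D] (k : ℕ) :
    ∀ (α β : Type) [Fintype α] [Fintype β]
      (r₁ r₂ : α) (γ : Fin (k + 1) → β) (ρ : Fin k → α),
      r₁ ≠ r₂ → Function.Injective γ → Function.Injective ρ →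
      (∀ i, ρ i ≠ r₁) → (∀ i, ρ i ≠ r₂) →
      ∀ d : MvPolynomial (α × β) D,
      (d ∣ (Matrix.of fun i j => X (Fin.cons r₁ ρ i, γ j)).det) →
      (d ∣ (Matrix.of fun i j => X (Fin.cons r₂ ρ i, γ j)).det) →
      IsUnit d := by
  induction k with
  | zero =>
    intro α β _ _ r₁ r₂ γ ρ hr hγ hρ hρ₁ hρ₂ d h₁ h₂
    classical
    rw [Matrix.det_fin_one] at h₁ h₂
    simp only [Matrix.of_apply, Fin.cons_zero] at h₁ h₂
    have hvars : ∀ v : α × β, v.1 = r₁ → v ∉ d.vars := by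
      intro v hv1 hmem
      have hX : (X (r₂, γ 0) : MvPolynomial (α × β) D) ≠ 0 := X_ne_zero _
      refine gtm_notMem_vars_of_dvd h₂ hX ?_ hmem
      rw [vars_X]
      simp only [Finset.mem_singleton]
      intro hh
      apply hr
      rw [← hv1, hh]
    set g : α × β → MvPolynomial (α × β) D :=
      fun p => if p.1 = r₁ then (if p.2 = γ 0 then 1 else 0) else X p with hg
    have hfix : aeval g d = d := by
      refine gtm_aeval_eq_self _ _ fun i hi => ?_
      rw [hg]
      dsimp only
      rw [if_neg fun hh => hvars i hh hi]
    have hd1 : aeval g d ∣ aeval g (X (r₁, γ 0)) := map_dvd _ h₁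
    rw [hfix, aeval_X] at hd1
    have hg1 : g (r₁, γ 0) = 1 := by simp [hg]
    rw [hg1] at hd1
    exact isUnit_of_dvd_one hd1
  | succ k ih =>
    intro α β _ _ r₁ r₂ γ ρ hr hγ hρ hρ₁ hρ₂ d h₁ h₂
    classical
    have hconsinj : Function.Injective (Fin.cons (α := fun _ => α) r₂ ρ : Fin (k + 2) → α) := by
      refine Fin.cons_injective_of_injective ?_ hρ
      rintro ⟨i, hi⟩
      exact hρ₂ i hi
    have hM₂ : (Matrix.of fun i j => (X (Fin.cons (α := fun _ => α) r₂ ρ i, γ j) : MvPolynomial (α × β) D)).det ≠ 0 :=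
      gtm_det_X_ne_zero _ _ hconsinj hγ
    have hsupp : (Matrix.of fun i j => (X (Fin.cons (α := fun _ => α) r₂ ρ i, γ j) : MvPolynomial (α × β) D)).det ∈
        supported D {p : α × β | p.1 ≠ r₁} := by
      refine gtm_det_mem_supported _ _ fun i j => ?_
      simp only [Matrix.of_apply]
      rw [X_mem_supported]
      simp only [Set.mem_setOf_eq]
      refine Fin.cases ?_ ?_ i
      · exact Ne.symm hr
      · exact fun t => hρ₁ t
    have hvars : ∀ v : α × β, v.1 = r₁ → v ∉ d.vars := by
      intro v hv1 hmem
      have hv2 : v ∉ (Matrix.of fun i j =>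
          (X (Fin.cons (α := fun _ => α) r₂ ρ i, γ j) : MvPolynomial (α × β) D)).det.vars := by
        intro hmem2
        exact (mem_supported.mp hsupp hmem2) hv1
      exact gtm_notMem_vars_of_dvd h₂ hM₂ hv2 hmem
    -- extract cofactors
    have hdvdN : ∀ j : Fin (k + 2), d ∣ (Matrix.of fun (t : Fin (k + 1)) (j' : Fin (k + 1)) =>
        (X (ρ t, γ (j.succAbove j')) : MvPolynomial (α × β) D)).det := by
      intro j
      set g : α × β → MvPolynomial (α × β) D :=
        fun p => if p.1 = r₁ then (if p.2 = γ j then 1 else 0) else X p with hg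
      have hfix : aeval g d = d := by
        refine gtm_aeval_eq_self _ _ fun i hi => ?_
        rw [hg]
        dsimp only
        rw [if_neg fun hh => hvars i hh hi]
      have h3 : aeval g d ∣ aeval g (Matrix.of fun i j' =>
          (X (Fin.cons (α := fun _ => α) r₁ ρ i, γ j') : MvPolynomial (α × β) D)).det := map_dvd _ h₁
      rw [hfix, AlgHom.map_det, AlgHom.mapMatrix_apply] at h3
      set A := (Matrix.of fun i j' =>
          (X (Fin.cons (α := fun _ => α) r₁ ρ i, γ j') : MvPolynomial (α × β) D)).map (aeval g) with hA
      have hA0 : ∀ j', A 0 j' = if j' = j then 1 else 0 := by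
        intro j'
        simp only [hA, Matrix.map_apply, Matrix.of_apply, Fin.cons_zero, aeval_X, hg]
        rw [if_pos trivial]
        by_cases h : j' = j
        · subst h; rw [if_pos rfl, if_pos rfl]
        · rw [if_neg (fun hh => h (hγ hh)), if_neg h]
      have hAs : ∀ (t : Fin (k + 1)) j', A (Fin.succ t) j' = X (ρ t, γ j') := by
        intro t j'
        simp only [hA, Matrix.map_apply, Matrix.of_apply, Fin.cons_succ, aeval_X, hg]
        rw [if_neg (hρ₁ t)]
      rw [Matrix.det_succ_row_zero] at h3
      have h6 : A.submatrix Fin.succ j.succAbove = Matrix.of fun t j' =>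
          (X (ρ t, γ (j.succAbove j')) : MvPolynomial (α × β) D) := by
        ext t j'
        rw [Matrix.submatrix_apply, hAs, Matrix.of_apply]
      rw [Finset.sum_eq_single j (fun j' _ hj' => by rw [hA0, if_neg hj', mul_zero, zero_mul])
        (fun h => absurd (Finset.mem_univ j) h), hA0, if_pos rfl, mul_one, h6] at h3
      exact gtm_dvd_of_dvd_unit_mul (isUnit_one.neg.pow _) h3
    -- swap rows and columns
    set sw := renameEquiv D (Equiv.prodComm α β) with hsw
    set d2 := sw d with hd2
    have hswd : ∀ j : Fin (k + 2), d2 ∣ (Matrix.of fun (i : Fin (k + 1)) (j' : Fin (k + 1)) =>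
        (X (γ (j.succAbove i), ρ j') : MvPolynomial (β × α) D)).det := by
      intro j
      have h7 := map_dvd sw (hdvdN j)
      rw [AlgEquiv.map_det, AlgEquiv.mapMatrix_apply] at h7
      have h8 : ((Matrix.of fun t j' =>
            (X (ρ t, γ (j.succAbove j')) : MvPolynomial (α × β) D)).map sw) =
          (Matrix.of fun (i : Fin (k + 1)) (j' : Fin (k + 1)) =>
            (X (γ (j.succAbove i), ρ j') : MvPolynomial (β × α) D))ᵀ := by
        ext t j'
        simp [hsw, Matrix.transpose_apply, renameEquiv_apply, rename_X]
      rw [h8, Matrix.det_transpose] at h7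
      exact h7
    have hc0 : (fun i : Fin (k + 1) => γ ((0 : Fin (k + 2)).succAbove i)) =
        Fin.cons (α := fun _ => β) (γ 1) (fun t : Fin k => γ t.succ.succ) := by
      funext i
      refine Fin.cases ?_ ?_ i
      · rw [Fin.cons_zero, Fin.succAbove_zero, Fin.succ_zero_eq_one]
      · intro t
        rw [Fin.cons_succ, Fin.succAbove_zero]
    have hc1 : (fun i : Fin (k + 1) => γ ((1 : Fin (k + 2)).succAbove i)) =
        Fin.cons (α := fun _ => β) (γ 0) (fun t : Fin k => γ t.succ.succ) := by
      funext i
      refine Fin.cases ?_ ?_ i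
      · rw [Fin.cons_zero, Fin.one_succAbove_zero]
      · intro t
        rw [Fin.cons_succ, Fin.succAbove_of_le_castSucc]
        simp only [Fin.le_def, Fin.val_one, Fin.coe_castSucc, Fin.val_succ]
        omega
    have hu1 : d2 ∣ (Matrix.of fun (i : Fin (k + 1)) (j' : Fin (k + 1)) =>
        (X (Fin.cons (α := fun _ => β) (γ 1) (fun t : Fin k => γ t.succ.succ) i, ρ j') :
          MvPolynomial (β × α) D)).det := by
      have hmx : (Matrix.of fun (i : Fin (k + 1)) (j' : Fin (k + 1)) =>
          (X (γ ((0 : Fin (k + 2)).succAbove i), ρ j') : MvPolynomial (β × α) D)) =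
          Matrix.of fun i j' => X (Fin.cons (α := fun _ => β) (γ 1) (fun t : Fin k => γ t.succ.succ) i, ρ j') := by
        ext i j'
        rw [Matrix.of_apply, Matrix.of_apply, congrFun hc0 i]
      have := hswd 0
      rwa [hmx] at this
    have hu2 : d2 ∣ (Matrix.of fun (i : Fin (k + 1)) (j' : Fin (k + 1)) =>
        (X (Fin.cons (α := fun _ => β) (γ 0) (fun t : Fin k => γ t.succ.succ) i, ρ j') :
          MvPolynomial (β × α) D)).det := by
      have hmx : (Matrix.of fun (i : Fin (k + 1)) (j' : Fin (k + 1)) =>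
          (X (γ ((1 : Fin (k + 2)).succAbove i), ρ j') : MvPolynomial (β × α) D)) =
          Matrix.of fun i j' => X (Fin.cons (α := fun _ => β) (γ 0) (fun t : Fin k => γ t.succ.succ) i, ρ j') := by
        ext i j'
        rw [Matrix.of_apply, Matrix.of_apply, congrFun hc1 i]
      have := hswd 1
      rwa [hmx] at this
    have hud2 : IsUnit d2 := by
      refine ih β α (γ 1) (γ 0) ρ (fun t => γ t.succ.succ) ?_ hρ ?_ ?_ ?_ d2 hu1 hu2
      · exact fun h => one_ne_zero (hγ h)
      · intro a b h
        exact Fin.succ_injective _ (Fin.succ_injective _ (hγ h))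
      · intro t h
        have := hγ h
        rw [Fin.ext_iff] at this
        simp only [Fin.val_succ, Fin.val_one] at this
        omega
      · intro t h
        have := hγ h
        rw [Fin.ext_iff] at this
        simp only [Fin.val_succ, Fin.val_zero] at this
        omega
    have : IsUnit (sw.symm d2) := hud2.map _
    rwa [hd2, AlgEquiv.symm_apply_apply] at this




set_option maxHeartbeats 1000000 in
/-- Let `D` be a factorial Noetherian domain and `𝒳` the generic `(n+1) × n` matrix of
indeterminates over `D`.  Then the ideal of `D[X]` generated by the `n × n` minors of `𝒳`
has grade at least `2`, i.e. contains a regular sequence of length two. -/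
theorem grade_two_of_generic_maximal_minors
    (D : Type*) [CommRing D] [IsDomain D] [IsNoetherianRing D] [UniqueFactorizationMonoid D]
    (n : ℕ) (hn : 0 < n)
    (𝒳 : Matrix (Fin (n + 1)) (Fin n) (MvPolynomial (Fin (n + 1) × Fin n) D))
    (h𝒳 : ∀ i j, 𝒳 i j = MvPolynomial.X (i, j))
    (Δ : Fin (n + 1) → MvPolynomial (Fin (n + 1) × Fin n) D)
    (hΔ : ∀ i, Δ i = (-1 : MvPolynomial (Fin (n + 1) × Fin n) D) ^ (i : ℕ) *
      (𝒳.submatrix i.succAbove id).det) :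
    ∃ a b : MvPolynomial (Fin (n + 1) × Fin n) D,
      a ∈ Ideal.span (Set.range Δ) ∧ b ∈ Ideal.span (Set.range Δ) ∧
      RingTheory.Sequence.IsRegular (MvPolynomial (Fin (n + 1) × Fin n) D) [a, b] := by
  classical
  open Pointwise in
  obtain ⟨k, rfl⟩ : ∃ k, n = k + 1 := ⟨n - 1, (Nat.succ_pred_eq_of_pos hn).symm⟩
  let R := MvPolynomial (Fin (k + 1 + 1) × Fin (k + 1)) D
  let r₁ : Fin (k + 2) := Fin.last (k + 1)
  let r₂ : Fin (k + 2) := 0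
  let ρ : Fin k → Fin (k + 2) := fun t => Fin.castSucc (Fin.succ t)
  let M₁ : Matrix (Fin (k + 1)) (Fin (k + 1)) R :=
    Matrix.of fun i j => X (Fin.cons (α := fun _ => Fin (k + 2)) r₁ ρ i, id j)
  let M₂ : Matrix (Fin (k + 1)) (Fin (k + 1)) R :=
    Matrix.of fun i j => X (Fin.cons (α := fun _ => Fin (k + 2)) r₂ ρ i, id j)
  have hrot : ∀ i : Fin (k + 1),
      (Fin.cons (α := fun _ => Fin (k + 2)) r₁ ρ) (finRotate (k + 1) i) = Fin.succ i := by
    intro i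
    refine Fin.lastCases ?_ ?_ i
    · rw [finRotate_last, Fin.cons_zero, Fin.succ_last]
    · intro t
      have h1 : finRotate (k + 1) (Fin.castSucc t) = Fin.succ t := by
        rw [finRotate_succ_apply]
        apply Fin.ext
        rw [Fin.val_add_one_of_lt (Fin.castSucc_lt_last t), Fin.coe_castSucc, Fin.val_succ]
      rw [h1, Fin.cons_succ]
      exact (Fin.succ_castSucc t).symm
  have hadet : Δ 0 = (M₁.submatrix (finRotate (k + 1)) id).det := by
    rw [hΔ 0]
    simp only [Fin.val_zero, pow_zero, one_mul]
    congr 1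
    apply Matrix.ext
    intro i j
    show 𝒳 (Fin.succAbove 0 i) (id j) =
      X (Fin.cons (α := fun _ => Fin (k + 2)) r₁ ρ (finRotate (k + 1) i), id j)
    rw [h𝒳, Fin.succAbove_zero, hrot i]
  have hconsM₂ : ∀ i : Fin (k + 1),
      (Fin.cons (α := fun _ => Fin (k + 2)) r₂ ρ) i = Fin.castSucc i := by
    intro i
    refine Fin.cases ?_ ?_ i
    · rw [Fin.cons_zero, Fin.castSucc_zero]
    · intro t
      rw [Fin.cons_succ]
  have hbdet : Δ (Fin.last (k + 1)) = (-1 : R) ^ (k + 1) * M₂.det := by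
    rw [hΔ (Fin.last (k + 1)), Fin.val_last]
    congr 1
    congr 1
    apply Matrix.ext
    intro i j
    show 𝒳 (Fin.succAbove (Fin.last (k + 1)) i) (id j) =
      X (Fin.cons (α := fun _ => Fin (k + 2)) r₂ ρ i, id j)
    rw [h𝒳, Fin.succAbove_last, hconsM₂ i]
  have hrne : r₁ ≠ r₂ := by
    show Fin.last (k + 1) ≠ 0
    simp [Fin.ext_iff]
  have hρinj : Function.Injective ρ := fun s t h =>
    Fin.succ_injective _ (Fin.castSucc_injective _ h)
  have hρ₁ : ∀ t, ρ t ≠ r₁ := by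
    intro t
    show Fin.castSucc (Fin.succ t) ≠ Fin.last (k + 1)
    simp only [Ne, Fin.ext_iff, Fin.coe_castSucc, Fin.val_succ, Fin.val_last]
    omega
  have hρ₂ : ∀ t, ρ t ≠ r₂ := by
    intro t
    show Fin.castSucc (Fin.succ t) ≠ 0
    simp [Fin.ext_iff]
  have hM₁inj : Function.Injective (Fin.cons (α := fun _ => Fin (k + 2)) r₁ ρ) := by
    refine Fin.cons_injective_of_injective ?_ hρinj
    rintro ⟨t, ht⟩
    exact hρ₁ t ht
  have hM₁ne : M₁.det ≠ 0 := gtm_det_X_ne_zero _ _ hM₁inj Function.injective_id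
  have hsign : IsUnit (((Equiv.Perm.sign (finRotate (k + 1)) : ℤ) : R)) := by
    rcases Int.units_eq_one_or (Equiv.Perm.sign (finRotate (k + 1))) with h | h <;>
      rw [h] <;> simp
  have hrel : IsRelPrime (Δ 0) (Δ (Fin.last (k + 1))) := by
    intro d hda hdb
    have h1 : d ∣ M₁.det := by
      rw [hadet, Matrix.det_permute] at hda
      exact gtm_dvd_of_dvd_unit_mul hsign hda
    have h2 : d ∣ M₂.det := by
      rw [hbdet] at hdb
      exact gtm_dvd_of_dvd_unit_mul (isUnit_one.neg.pow _) hdb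
    exact gtm_key k (Fin (k + 2)) (Fin (k + 1)) r₁ r₂ id ρ hrne Function.injective_id
      hρinj hρ₁ hρ₂ d h1 h2
  have ha0 : Δ 0 ≠ 0 := by
    rw [hadet, Matrix.det_permute]
    exact mul_ne_zero hsign.ne_zero hM₁ne
  have hca : constantCoeff (Δ 0) = 0 := by
    rw [hadet, RingHom.map_det]
    have hz : constantCoeff.mapMatrix (M₁.submatrix (finRotate (k + 1)) id) = 0 := by
      apply Matrix.ext
      intro i j
      show constantCoeff (X (Fin.cons (α := fun _ => Fin (k + 2)) r₁ ρ
        (finRotate (k + 1) i), id j)) = 0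
      rw [constantCoeff_X]
    rw [hz, Matrix.det_zero]
  have hcb : constantCoeff (Δ (Fin.last (k + 1))) = 0 := by
    rw [hbdet, _root_.map_mul, RingHom.map_det]
    have hz : constantCoeff.mapMatrix M₂ = 0 := by
      apply Matrix.ext
      intro i j
      show constantCoeff (X (Fin.cons (α := fun _ => Fin (k + 2)) r₂ ρ i, id j)) = 0
      rw [constantCoeff_X]
    rw [hz, Matrix.det_zero, mul_zero]
  have hmem : ∀ z : R, z ∈ ((Δ 0) • (⊤ : Submodule R R)) ↔ (Δ 0) ∣ z := by
    intro z
    constructor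
    · intro hz
      obtain ⟨y, -, hy⟩ := Set.mem_smul_set.mp hz
      exact ⟨y, by rw [← hy, smul_eq_mul]⟩
    · rintro ⟨c, rfl⟩
      have := Submodule.smul_mem_pointwise_smul c (Δ 0) (⊤ : Submodule R R) trivial
      rwa [smul_eq_mul] at this
  refine ⟨Δ 0, Δ (Fin.last (k + 1)), Ideal.subset_span ⟨0, rfl⟩,
    Ideal.subset_span ⟨Fin.last (k + 1), rfl⟩, ?_, ?_⟩
  · refine RingTheory.Sequence.IsWeaklyRegular.cons ?_
      (RingTheory.Sequence.IsWeaklyRegular.cons ?_ ?_)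
    · intro x y hxy
      exact mul_left_cancel₀ ha0 (by simpa only [smul_eq_mul] using hxy)
    · intro x y hxy
      obtain ⟨x, rfl⟩ := Submodule.Quotient.mk_surjective _ x
      obtain ⟨y, rfl⟩ := Submodule.Quotient.mk_surjective _ y
      beta_reduce at hxy
      rw [← Submodule.Quotient.mk_smul, ← Submodule.Quotient.mk_smul,
        Submodule.Quotient.eq] at hxy
      rw [Submodule.Quotient.eq]
      rw [hmem] at hxy ⊢
      have hd : Δ 0 ∣ Δ (Fin.last (k + 1)) * (x - y) := by
        rw [mul_sub]
        simpa only [smul_eq_mul] using hxy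
      exact hrel.dvd_of_dvd_mul_left hd
    · exact RingTheory.Sequence.IsWeaklyRegular.nil _ _
  · intro hEq
    have h1 : (1 : R) ∈ Ideal.ofList [Δ 0, Δ (Fin.last (k + 1))] • (⊤ : Submodule R R) :=
      hEq ▸ Submodule.mem_top
    have hle : Ideal.ofList [Δ 0, Δ (Fin.last (k + 1))] • (⊤ : Submodule R R) ≤
        (Ideal.ofList [Δ 0, Δ (Fin.last (k + 1))] : Submodule R R) :=
      Submodule.smul_le.mpr fun r hr m _ => by
        simpa only [smul_eq_mul] using Ideal.mul_mem_right m _ hr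
    have h2 : (1 : R) ∈ Ideal.ofList [Δ 0, Δ (Fin.last (k + 1))] := hle h1
    have hset : {r : R | r ∈ [Δ 0, Δ (Fin.last (k + 1))]} = {Δ 0, Δ (Fin.last (k + 1))} := by
      ext x
      simp
    rw [Ideal.ofList, hset] at h2
    obtain ⟨p, q, hpq⟩ := Ideal.mem_span_pair.mp h2
    have hc := congrArg constantCoeff hpq
    rw [map_add, _root_.map_mul, _root_.map_mul, hca, hcb, mul_zero, mul_zero, add_zero,
      _root_.map_one] at hc
    exact one_ne_zero (α := D) hc.symm
end

section
/- Let R be a reduced Noetherian ring. Then the total quotient ring Q(R) of R is isomorphic as an R-algebra to the direct product over the minimal primes P of R of the fraction fields Frac(R/P). -/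
section Aux
variable {R : Type*} [CommRing R]

lemma aux_eq_zero_of_mem_all [IsReduced R] (x : R)
    (h : ∀ P ∈ minimalPrimes R, x ∈ P) : x = 0 := by
  have hx : x ∈ nilradical R := by
    rw [nilradical_eq_sInf]
    refine Ideal.mem_sInf.mpr fun {J} hJ => ?_
    haveI : J.IsPrime := hJ
    obtain ⟨p, hp, hpJ⟩ := Ideal.exists_minimalPrimes_le (I := (⊥ : Ideal R)) (J := J) bot_le
    exact hpJ (h p hp)
  rwa [nilradical_eq_zero, Ideal.zero_eq_bot, Ideal.mem_bot] at hx

lemma aux_mem_nonZeroDivisors [IsReduced R] (x : R)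
    (h : ∀ P ∈ minimalPrimes R, x ∉ P) : x ∈ nonZeroDivisors R := by
  rw [mem_nonZeroDivisors_iff_right]
  intro t ht
  refine aux_eq_zero_of_mem_all t fun P hP => ?_
  haveI : P.IsPrime := hP.1.1
  rcases (Ideal.IsPrime.mem_or_mem ‹P.IsPrime› (show t * x ∈ P by rw [ht]; exact P.zero_mem)) with h1 | h1
  · exact h1
  · exact absurd h1 (h P hP)

lemma aux_not_mem [IsReduced R] {P : Ideal R} (hP : P ∈ minimalPrimes R)
    {x : R} (hx : x ∈ nonZeroDivisors R) : x ∉ P := by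
  haveI : P.IsPrime := hP.1.1
  intro hxP
  have h0 : (0 : R) ∈ P.primeCompl ⊔ Submonoid.powers x := by
    by_contra h0
    have hd : Disjoint ((⊥ : Ideal R) : Set R) ((P.primeCompl ⊔ Submonoid.powers x : Submonoid R) : Set R) := by
      rw [Set.disjoint_left]
      intro a ha
      simp only [SetLike.mem_coe, Ideal.mem_bot] at ha
      subst ha
      exact h0
    obtain ⟨Q, hQp, -, hQd⟩ := Ideal.exists_le_prime_disjoint _ _ hd
    have hQP : Q ≤ P := by
      intro a haQ
      by_contra haP
      exact Set.disjoint_left.mp hQd haQ (Submonoid.mem_sup_left haP)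
    have hPQ : P ≤ Q := hP.2 ⟨hQp, bot_le⟩ hQP
    exact Set.disjoint_left.mp hQd (hPQ hxP)
      (Submonoid.mem_sup_right (Submonoid.mem_powers x))
  obtain ⟨s, hs, z, hz, hsz⟩ := Submonoid.mem_sup.mp h0
  obtain ⟨n, rfl⟩ := hz
  have hnil : (s * x) ^ (n + 1) = 0 := by
    have : (s * x) ^ (n + 1) = (s * x ^ n) * (s ^ n * x) := by ring
    rw [this, hsz, zero_mul]
  have hsx : s * x = 0 := IsNilpotent.eq_zero ⟨n + 1, hnil⟩
  have hs0 : s = 0 := (mul_right_mem_nonZeroDivisors_eq_zero_iff hx).mp hsx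
  exact hs (hs0 ▸ P.zero_mem)

end Aux

/-- Let `R` be a reduced Noetherian commutative ring.  Then the total quotient ring of `R`
(the localization at the non-zero-divisors) is isomorphic, as an `R`-algebra (expressed via
a ring isomorphism compatible with the structure maps), to the product over the minimal
primes `P` of `R` of the fraction fields of the domains `R ⧸ P`. -/
theorem totalQuotientRing_equiv_prod_fractionFields
    (R : Type*) [CommRing R] [IsNoetherianRing R] [IsReduced R] :
    ∃ e : FractionRing R ≃+*
        ((P : {P : Ideal R // P ∈ minimalPrimes R}) →
          letI : P.1.IsPrime := P.2.1.1
          FractionRing (R ⧸ P.1)),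
      ∀ r : R, e (algebraMap R (FractionRing R) r) =
        fun (P : {P : Ideal R // P ∈ minimalPrimes R}) =>
          letI : P.1.IsPrime := P.2.1.1
          algebraMap (R ⧸ P.1) (FractionRing (R ⧸ P.1)) (Ideal.Quotient.mk P.1 r) := by
  classical
  set ι := {P : Ideal R // P ∈ minimalPrimes R} with hι
  have inst : ∀ P : ι, P.1.IsPrime := fun P => P.2.1.1
  haveI : ∀ P : ι, P.1.IsPrime := inst
  set T := (P : ι) → FractionRing (R ⧸ P.1) with hT
  set φ : R →+* T := Pi.ringHom fun P =>
    (algebraMap (R ⧸ P.1) (FractionRing (R ⧸ P.1))).comp (Ideal.Quotient.mk P.1) with hφ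
  letI : Algebra R T := φ.toAlgebra
  have halg : algebraMap R T = φ := rfl
  haveI : Fintype ι := (minimalPrimes.finite_of_isNoetherianRing R).fintype
  -- injectivity of each component on quotients
  have hinj : ∀ (P : ι) (a : R ⧸ P.1),
      algebraMap (R ⧸ P.1) (FractionRing (R ⧸ P.1)) a = 0 → a = 0 := by
    intro P a ha
    haveI := inst P
    exact (IsFractionRing.to_map_eq_zero_iff (K := FractionRing (R ⧸ P.1))).mp ha
  haveI : IsLocalization (nonZeroDivisors R) T := by
    refine ⟨⟨?_, ?_, ?_⟩⟩
    · -- map_units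
      rintro ⟨s, hs⟩
      rw [halg]
      have hne : ∀ P : ι, φ s P ≠ 0 := by
        intro P
        haveI := inst P
        have hne0 : (Ideal.Quotient.mk P.1 s : R ⧸ P.1) ≠ 0 := by
          rw [Ne, Ideal.Quotient.eq_zero_iff_mem]
          exact aux_not_mem P.2 hs
        exact fun h => hne0 (by simpa using (IsFractionRing.to_map_eq_zero_iff
          (K := FractionRing (R ⧸ P.1))).mp h)
      refine IsUnit.of_mul_eq_one (fun P => letI := inst P; (φ s P)⁻¹) ?_
      funext P
      haveI := inst P
      exact mul_inv_cancel₀ (hne P)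
    · -- surj
      intro z
      -- choose numerators and denominators for each component
      have hchoice : ∀ P : ι, ∃ a b : R, b ∉ P.1 ∧
          z P * algebraMap (R ⧸ P.1) (FractionRing (R ⧸ P.1)) (Ideal.Quotient.mk P.1 b)
            = algebraMap (R ⧸ P.1) (FractionRing (R ⧸ P.1)) (Ideal.Quotient.mk P.1 a) := by
        intro P
        haveI := inst P
        obtain ⟨⟨a0, b0⟩, hb⟩ := IsLocalization.surj (nonZeroDivisors (R ⧸ P.1)) (z P)
        obtain ⟨a, rfl⟩ := Ideal.Quotient.mk_surjective a0
        obtain ⟨b, hb'⟩ := Ideal.Quotient.mk_surjective (b0 : R ⧸ P.1)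
        refine ⟨a, b, ?_, ?_⟩
        · rw [← Ideal.Quotient.eq_zero_iff_mem, hb']
          exact nonZeroDivisors.ne_zero b0.2
        · rw [hb']; exact hb
      choose a b hb hzab using hchoice
      -- for distinct minimal primes pick separating elements
      have hsep : ∀ P Q : ι, P ≠ Q → ∃ x : R, x ∈ P.1 ∧ x ∉ Q.1 := by
        intro P Q hne
        by_contra hc
        push_neg at hc
        have hle : P.1 ≤ Q.1 := fun x hx => by
          by_contra h
          exact h (hc x hx)
        have : Q.1 ≤ P.1 := Q.2.2 ⟨inst P, bot_le⟩ hle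
        exact hne (Subtype.ext (le_antisymm hle this))
      choose xsep hx1 hx2 using hsep
      -- c Q : in every P ≠ Q, not in Q
      set c : ι → R := fun Q => ∏ P ∈ Finset.univ.erase Q,
        (if h : P = Q then 1 else xsep P Q h) with hc
      have hcnot : ∀ Q : ι, c Q ∉ Q.1 := by
        intro Q hQ
        haveI := inst Q
        rw [hc] at hQ
        obtain ⟨P, hPmem, hPin⟩ := (Ideal.IsPrime.prod_mem_iff).mp hQ
        rw [dif_neg (Finset.ne_of_mem_erase hPmem)] at hPin
        exact hx2 P Q (Finset.ne_of_mem_erase hPmem) hPin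
      have hcmem : ∀ P Q : ι, P ≠ Q → c Q ∈ P.1 := by
        intro P Q hne
        have hmem : P ∈ (Finset.univ.erase Q) := Finset.mem_erase.mpr ⟨hne, Finset.mem_univ P⟩
        have key := Finset.mul_prod_erase (Finset.univ.erase Q)
          (fun P' => if h : P' = Q then 1 else xsep P' Q h) hmem
        have : (∏ P' ∈ Finset.univ.erase Q,
            if h : P' = Q then 1 else xsep P' Q h) ∈ P.1 := by
          rw [← key]
          refine Ideal.mul_mem_right _ _ ?_
          show (if h : P = Q then 1 else xsep P Q h) ∈ P.1
          rw [dif_neg hne]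
          exact hx1 P Q hne
        simpa [hc] using this
      set s : R := ∑ Q : ι, c Q * b Q with hsdef
      set r : R := ∑ Q : ι, c Q * a Q with hrdef
      -- congruences
      have hscong : ∀ P : ι, Ideal.Quotient.mk P.1 s = Ideal.Quotient.mk P.1 (c P * b P) := by
        intro P
        rw [Ideal.Quotient.mk_eq_mk_iff_sub_mem, hsdef,
          ← Finset.add_sum_erase _ _ (Finset.mem_univ P), add_sub_cancel_left]
        exact Ideal.sum_mem _ fun Q hQ =>
          Ideal.mul_mem_right _ _ (hcmem P Q (Finset.ne_of_mem_erase hQ).symm)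
      have hrcong : ∀ P : ι, Ideal.Quotient.mk P.1 r = Ideal.Quotient.mk P.1 (c P * a P) := by
        intro P
        rw [Ideal.Quotient.mk_eq_mk_iff_sub_mem, hrdef,
          ← Finset.add_sum_erase _ _ (Finset.mem_univ P), add_sub_cancel_left]
        exact Ideal.sum_mem _ fun Q hQ =>
          Ideal.mul_mem_right _ _ (hcmem P Q (Finset.ne_of_mem_erase hQ).symm)
      have hsnzd : s ∈ nonZeroDivisors R := by
        refine aux_mem_nonZeroDivisors s fun P hP hmem => ?_
        haveI : P.IsPrime := hP.1.1
        set P' : ι := ⟨P, hP⟩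
        have : Ideal.Quotient.mk P s = 0 := (Ideal.Quotient.eq_zero_iff_mem).mpr hmem
        rw [hscong P'] at this
        rw [Ideal.Quotient.eq_zero_iff_mem] at this
        rcases Ideal.IsPrime.mem_or_mem ‹P.IsPrime› this with h1 | h1
        · exact hcnot P' h1
        · exact hb P' h1
      refine ⟨⟨r, ⟨s, hsnzd⟩⟩, ?_⟩
      rw [halg]
      funext P
      haveI := inst P
      show z P * (algebraMap (R ⧸ P.1) (FractionRing (R ⧸ P.1))) (Ideal.Quotient.mk P.1 s)
        = (algebraMap (R ⧸ P.1) (FractionRing (R ⧸ P.1))) (Ideal.Quotient.mk P.1 r)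
      rw [hscong P, hrcong P, map_mul, map_mul, map_mul, map_mul, ← mul_assoc,
        mul_comm (z P) _, mul_assoc, hzab P]
    · -- exists_of_eq
      intro x y hxy
      refine ⟨1, ?_⟩
      rw [halg] at hxy
      have heq : x = y := by
        have : x - y = 0 := by
          refine aux_eq_zero_of_mem_all _ fun P hP => ?_
          haveI : P.IsPrime := hP.1.1
          set P' : ι := ⟨P, hP⟩
          have h1 : Ideal.Quotient.mk P x = Ideal.Quotient.mk P y := by
            have := congrFun hxy P'
            simp only [hφ, Pi.ringHom_apply, RingHom.comp_apply] at this
            have hinj' : Function.Injective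
                (algebraMap (R ⧸ P) (FractionRing (R ⧸ P))) :=
              IsFractionRing.injective _ _
            exact hinj' this
          rwa [Ideal.Quotient.mk_eq_mk_iff_sub_mem] at h1
        exact sub_eq_zero.mp this
      rw [heq]
  refine ⟨(IsLocalization.algEquiv (nonZeroDivisors R) (FractionRing R) T).toRingEquiv,
    fun r => ?_⟩
  have h := (IsLocalization.algEquiv (nonZeroDivisors R) (FractionRing R) T).commutes r
  exact h.trans rfl
end

section
/- Let k be a field, R a standard graded k-algebra, and f = (f₀,…,f_m) a tuple of forms of the same degree d ≥ 1 such that (f)R contains a homogeneous regular element and R is torsionfree over the subalgebra k[f]. Suppose g = (g₀,…,g_r) is a tuple of forms of the same degree e ≥ 1 in S := k[f] (presented as a standard graded algebra after degree renormalization) such that (g)S contains a regular element and S is torsionfree over k[g]. Then the tuple g(f) := (g₀(f),…,g_r(f)) consists of forms of degree de in R, the ideal (g(f))R contains a regular element, and R is torsionfree over k[g(f)]; i.e., g(f) is a rational datum of degree de on R. -/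
/-- `R` is torsionfree over the subalgebra `A`: regular elements of `A` are non-zero-divisors
on `R`. -/
def TorsionFreeOverSub {k R : Type*} [CommSemiring k] [CommRing R] [Algebra k R]
    (A : Subalgebra k R) : Prop :=
  ∀ a : A, a ∈ nonZeroDivisors A → ∀ r : R, (a : R) * r = 0 → r = 0

lemma aeval_homog_mem
    {k R : Type*} [Field k] [CommRing R] [Algebra k R]
    (𝒜 : ℕ → Submodule k R) [GradedAlgebra 𝒜]
    {n d e : ℕ} (f : Fin n → R) (hf : ∀ j, f j ∈ 𝒜 d)
    (P : MvPolynomial (Fin n) k) (hP : P.IsHomogeneous e) :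
    MvPolynomial.aeval f P ∈ 𝒜 (d * e) := by
  rw [MvPolynomial.aeval_def, MvPolynomial.eval₂_eq]
  refine Submodule.sum_mem _ fun s hs => ?_
  rw [Algebra.smul_def (MvPolynomial.coeff s P) _ |>.symm]
  refine Submodule.smul_mem _ _ ?_
  have h1 : (∏ i ∈ s.support, f i ^ s i) = ∏ i, f i ^ s i := by
    refine Finset.prod_subset (Finset.subset_univ _) fun i _ hi => ?_
    simp [Finsupp.notMem_support_iff.mp hi]
  have h2 : (∏ i, f i ^ s i) ∈ 𝒜 (∑ i, s i * d) :=
    SetLike.prod_pow_mem_graded 𝒜 _ _ _ fun i _ => hf i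
  have hdeg : (∑ i, s i * d) = d * e := by
    have h3 := hP (MvPolynomial.mem_support_iff.mp hs)
    have h4 : (Finsupp.weight (1 : Fin n → ℕ)) s = ∑ i, s i := by
      rw [Finsupp.weight_apply, Finsupp.sum_fintype]
      · simp [mul_comm]
      · simp
    rw [← Finset.sum_mul, mul_comm]
    congr 1
    rw [← h3, h4]
  rw [hdeg] at h2
  rw [h1]
  exact h2

/-- **Composition of rational data.** Let `R` be a reduced standard graded `k`-algebra and
`f = (f 0, …, f m)` a rational datum of degree `d ≥ 1` on `R`: the `f j` are forms of degree
`d`, the ideal `(f)` contains a homogeneous regular element, and `R` is torsionfree over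
`S = k[f]`.  Let `g` be a rational datum of degree `e ≥ 1` on `S`, given by homogeneous
polynomials `G ℓ` of degree `e` evaluated at `f`.  Then `g(f)` consists of forms of degree
`d*e` in `R`, the ideal `(g(f))R` contains a regular element, and `R` is torsionfree over
`k[g(f)]`; i.e. `g(f)` is a rational datum of degree `d*e` on `R`. -/
theorem composite_is_rational_datum
    (k : Type*) [Field k]
    (R : Type*) [CommRing R] [Algebra k R] [IsReduced R]
    (𝒜 : ℕ → Submodule k R) [GradedAlgebra 𝒜]
    (hstd : Algebra.adjoin k (𝒜 1 : Set R) = ⊤)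
    (m r : ℕ) (d e : ℕ) (hd : 1 ≤ d) (he : 1 ≤ e)
    (f : Fin (m + 1) → R) (hf : ∀ j, f j ∈ 𝒜 d)
    -- condition (ii) for f: the base ideal contains a homogeneous regular element
    (hreg : ∃ F ∈ Ideal.span (Set.range f), F ∈ nonZeroDivisors R ∧ ∃ q, F ∈ 𝒜 q)
    -- condition (i) for f: R is torsionfree over S = k[f]
    (htf : TorsionFreeOverSub (Algebra.adjoin k (Set.range f)))
    (G : Fin (r + 1) → MvPolynomial (Fin (m + 1)) k)
    (hG : ∀ ℓ, (G ℓ).IsHomogeneous e)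
    (g : Fin (r + 1) → R) (hg : ∀ ℓ, g ℓ = MvPolynomial.aeval f (G ℓ))
    -- condition (ii) for g on S = k[f]: the ideal (g)S contains a regular element of S
    (hregS : ∃ F : Algebra.adjoin k (Set.range f),
      (F : R) ∈ Ideal.span (Set.range g) ∧ F ∈ nonZeroDivisors (Algebra.adjoin k (Set.range f)))
    -- condition (i) for g on S: S is torsionfree over k[g]
    (htfS : ∀ b : Algebra.adjoin k (Set.range g),
      b ∈ nonZeroDivisors (Algebra.adjoin k (Set.range g)) →
      ∀ s : Algebra.adjoin k (Set.range f), (b : R) * (s : R) = 0 → (s : R) = 0) :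
    (∀ ℓ, g ℓ ∈ 𝒜 (d * e)) ∧
    (∃ F ∈ Ideal.span (Set.range g), F ∈ nonZeroDivisors R) ∧
    TorsionFreeOverSub (Algebra.adjoin k (Set.range g)) := by
  refine ⟨fun ℓ => ?_, ?_, ?_⟩
  · rw [hg ℓ]
    exact aeval_homog_mem 𝒜 f hf (G ℓ) (hG ℓ)
  · obtain ⟨F, hFg, hFreg⟩ := hregS
    refine ⟨(F : R), hFg, mem_nonZeroDivisors_iff_right.mpr fun z hz => ?_⟩
    exact htf F hFreg z (by rwa [mul_comm])
  · have hsub : Algebra.adjoin k (Set.range g) ≤ Algebra.adjoin k (Set.range f) := by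
      refine Algebra.adjoin_le ?_
      rintro _ ⟨ℓ, rfl⟩
      rw [hg ℓ, Algebra.adjoin_range_eq_range_aeval]
      exact ⟨G ℓ, rfl⟩
    intro b hb rr hrr
    set b' : Algebra.adjoin k (Set.range f) := ⟨(b : R), hsub b.2⟩ with hb'
    have hb'reg : b' ∈ nonZeroDivisors (Algebra.adjoin k (Set.range f)) := by
      rw [mem_nonZeroDivisors_iff_right]
      intro s hs
      have : (b : R) * (s : R) = 0 := by
        have := congrArg (fun x : Algebra.adjoin k (Set.range f) => (x : R)) hs
        exact (mul_comm _ _).trans this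
      exact Subtype.ext (htfS b hb s this)
    exact htf b' hb'reg rr hrr
end

section
/- Let f = (f₀,…,f_m) and f' = (f'₀,…,f'_m) be two equivalent ordered tuples of forms of the same degree in a reduced standard graded k-algebra R (i.e., there exist homogeneous regular elements F, F' ∈ R with F f'_j = F' f_j for all j). Then f satisfies the conditions of a rational datum (R torsionfree over k[f] and (f)R contains a regular element) if and only if f' does. -/
open MvPolynomial

section GradedAux

variable {k : Type*} [Field k] {R : Type*} [CommRing R] [Algebra k R]
variable (𝒜 : ℕ → Submodule k R) [GradedAlgebra 𝒜]

/-- The degree-`e` component of a finite sum, coerced. -/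
lemma decompose_coe_sum {ι : Type*} (s : Finset ι) (x : ι → R) (e : ℕ) :
    (DirectSum.decompose 𝒜 (∑ i ∈ s, x i) e : R)
      = ∑ i ∈ s, (DirectSum.decompose 𝒜 (x i) e : R) := by
  classical
  induction s using Finset.cons_induction with
  | empty => simp
  | cons a s ha ih =>
      rw [Finset.sum_cons, Finset.sum_cons, ← ih, DirectSum.decompose_add]
      rfl

/-- If a finite sum of elements of pairwise distinct graded components vanishes,
then each summand vanishes. -/
lemma comp_eq_zero_of_sum_eq_zero {ι : Type*} {s : Finset ι} {g : ι → ℕ} {x : ι → R}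
    (hmem : ∀ i ∈ s, x i ∈ 𝒜 (g i)) (hinj : Set.InjOn g s)
    (hsum : ∑ i ∈ s, x i = 0) : ∀ i ∈ s, x i = 0 := by
  classical
  intro i hi
  have h := congrArg (fun y => (DirectSum.decompose 𝒜 y (g i) : R)) hsum
  simp only [DirectSum.decompose_zero] at h
  rw [decompose_coe_sum] at h
  have hterm : ∀ j ∈ s, (DirectSum.decompose 𝒜 (x j) (g i) : R)
      = if j = i then x j else 0 := by
    intro j hj
    by_cases hji : j = i
    · subst hji; rw [if_pos rfl, DirectSum.decompose_of_mem_same 𝒜 (hmem j hj)]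
    · rw [if_neg hji, DirectSum.decompose_of_mem_ne 𝒜 (hmem j hj)]
      exact fun hgj => hji (hinj hj hi hgj)
  rw [Finset.sum_congr rfl hterm, Finset.sum_ite_eq' s i x, if_pos hi] at h
  simpa using h

/-- Multiplication by a homogeneous element shifts graded components. -/
lemma mul_decompose_coe {n : ℕ} {z : R} (hz : z ∈ 𝒜 n) (x : R) (i : ℕ) :
    z * (DirectSum.decompose 𝒜 x i : R) = (DirectSum.decompose 𝒜 (z * x) (n + i) : R) := by
  classical
  induction x using DirectSum.Decomposition.inductionOn 𝒜 with
  | zero => simp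
  | @homogeneous j y =>
      by_cases hij : i = j
      · subst hij
        rw [DirectSum.decompose_of_mem_same 𝒜 y.2,
          DirectSum.decompose_of_mem_same 𝒜 (SetLike.mul_mem_graded hz y.2)]
      · rw [DirectSum.decompose_of_mem_ne 𝒜 y.2 (Ne.symm hij), mul_zero,
          DirectSum.decompose_of_mem_ne 𝒜 (SetLike.mul_mem_graded hz y.2)]
        exact fun hc => hij (by omega)
  | add u v hu hv =>
      rw [mul_add, DirectSum.decompose_add, DirectSum.decompose_add, DirectSum.add_apply,
        DirectSum.add_apply, Submodule.coe_add, Submodule.coe_add, mul_add, hu, hv]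

end GradedAux

section McCoy

variable {k : Type*} [Field k] {R : Type*} [CommRing R] [Algebra k R]
variable (𝒜 : ℕ → Submodule k R) [GradedAlgebra 𝒜]

open scoped Classical in
/-- The top graded component of a product is the product of top components. -/
lemma top_component_mul (a r : R) (na nr : ℕ)
    (hna : ∀ i, na < i → (DirectSum.decompose 𝒜 a i : R) = 0)
    (hnr : ∀ i, nr < i → (DirectSum.decompose 𝒜 r i : R) = 0) :
    (DirectSum.decompose 𝒜 (a * r) (na + nr) : R)
      = (DirectSum.decompose 𝒜 a na : R) * (DirectSum.decompose 𝒜 r nr : R) := by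
  have expand : a * r = ∑ i ∈ (DirectSum.decompose 𝒜 a).support,
      ((DirectSum.decompose 𝒜 a i : R) * r) := by
    rw [← Finset.sum_mul, DirectSum.sum_support_decompose]
  rw [expand, decompose_coe_sum]
  have hterm : ∀ i ∈ (DirectSum.decompose 𝒜 a).support,
      (DirectSum.decompose 𝒜 ((DirectSum.decompose 𝒜 a i : R) * r) (na + nr) : R)
        = if i = na then (DirectSum.decompose 𝒜 a na : R) * (DirectSum.decompose 𝒜 r nr : R)
          else 0 := by
    intro i _
    by_cases hina : i = na
    · subst hina
      rw [if_pos rfl, mul_decompose_coe 𝒜 (SetLike.coe_mem _)]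
    · rw [if_neg hina]
      rcases lt_or_gt_of_ne hina with hlt | hgt
      · have hsplit : na + nr = i + (na + nr - i) := by omega
        rw [hsplit, ← mul_decompose_coe 𝒜 (SetLike.coe_mem _), hnr _ (by omega), mul_zero]
      · rw [hna i hgt, zero_mul]
        simp
  rw [Finset.sum_congr rfl hterm, Finset.sum_ite_eq' _ na]
  split
  · rfl
  · next h =>
      rw [DFinsupp.notMem_support_iff.mp h]
      simp

open scoped Classical in
lemma mccoy_aux : ∀ (N : ℕ) (a r : R),
    ((DirectSum.decompose 𝒜 a).support.card + (DirectSum.decompose 𝒜 r).support.card ≤ N) →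
    a * r = 0 → r ≠ 0 →
    ∃ (e : ℕ) (ρ : R), ρ ∈ 𝒜 e ∧ ρ ≠ 0 ∧
      (∀ i : ℕ, (DirectSum.decompose 𝒜 a i : R) * ρ = 0) ∧
      (∀ (n : ℕ) (z : R), z ∈ 𝒜 n → z * r = 0 → z * ρ = 0) := by
  intro N
  induction N with
  | zero =>
      intro a r hcard hmul hr
      exfalso
      apply hr
      have h1 : (DirectSum.decompose 𝒜 r).support.card = 0 := by omega
      have h0 : DirectSum.decompose 𝒜 r = 0 := by
        rwa [Finset.card_eq_zero, DFinsupp.support_eq_empty] at h1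
      simpa using congrArg (DirectSum.decompose 𝒜).symm h0
  | succ N ih =>
      intro a r hcard hmul hr
      have hrd : DirectSum.decompose 𝒜 r ≠ 0 := fun h0 =>
        hr (by simpa using congrArg (DirectSum.decompose 𝒜).symm h0)
      have hrsupp : (DirectSum.decompose 𝒜 r).support.Nonempty := by
        rw [Finset.nonempty_iff_ne_empty]
        intro h
        exact hrd (DFinsupp.support_eq_empty.mp h)
      set nr := (DirectSum.decompose 𝒜 r).support.max' hrsupp with hnr_def
      have hnr_mem : nr ∈ (DirectSum.decompose 𝒜 r).support := Finset.max'_mem _ _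
      have hr_top_ne : (DirectSum.decompose 𝒜 r nr : R) ≠ 0 := by
        have h := DFinsupp.mem_support_iff.mp hnr_mem
        simpa using h
      have hr_bound : ∀ i, nr < i → (DirectSum.decompose 𝒜 r i : R) = 0 := by
        intro i hi
        have hmem : i ∉ (DirectSum.decompose 𝒜 r).support := fun hmem =>
          absurd (Finset.le_max' _ i hmem) (by omega)
        rw [DFinsupp.notMem_support_iff.mp hmem]
        rfl
      by_cases ha : a = 0
      · refine ⟨nr, (DirectSum.decompose 𝒜 r nr : R), SetLike.coe_mem _, hr_top_ne, ?_, ?_⟩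
        · intro i
          subst ha
          simp
        · intro n z hz hzr
          rw [mul_decompose_coe 𝒜 hz, hzr]
          simp
      · have had : DirectSum.decompose 𝒜 a ≠ 0 := fun h0 =>
          ha (by simpa using congrArg (DirectSum.decompose 𝒜).symm h0)
        have hasupp : (DirectSum.decompose 𝒜 a).support.Nonempty := by
          rw [Finset.nonempty_iff_ne_empty]
          intro h
          exact had (DFinsupp.support_eq_empty.mp h)
        set na := (DirectSum.decompose 𝒜 a).support.max' hasupp with hna_def
        have hna_mem : na ∈ (DirectSum.decompose 𝒜 a).support := Finset.max'_mem _ _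
        have ha_bound : ∀ i, na < i → (DirectSum.decompose 𝒜 a i : R) = 0 := by
          intro i hi
          have hmem : i ∉ (DirectSum.decompose 𝒜 a).support := fun hmem =>
            absurd (Finset.le_max' _ i hmem) (by omega)
          rw [DFinsupp.notMem_support_iff.mp hmem]
          rfl
        have htop : (DirectSum.decompose 𝒜 a na : R) * (DirectSum.decompose 𝒜 r nr : R) = 0 := by
          rw [← top_component_mul 𝒜 a r na nr ha_bound hr_bound, hmul]
          simp
        by_cases hatr : (DirectSum.decompose 𝒜 a na : R) * r = 0
        · -- the top component of `a` kills `r`: shrink `a`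
          set a' := a - (DirectSum.decompose 𝒜 a na : R) with ha'def
          have ha'r : a' * r = 0 := by rw [ha'def, sub_mul, hmul, hatr, sub_zero]
          have hproj_a' : ∀ j, (DirectSum.decompose 𝒜 a' j : R)
              = if j = na then 0 else (DirectSum.decompose 𝒜 a j : R) := by
            intro j
            have hsub : (DirectSum.decompose 𝒜 a' j : R)
                = (DirectSum.decompose 𝒜 a j : R)
                  - (DirectSum.decompose 𝒜 (DirectSum.decompose 𝒜 a na : R) j : R) := by
              rw [ha'def, DirectSum.decompose_sub, DirectSum.sub_apply, Submodule.coe_sub]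
            by_cases hj : j = na
            · subst hj
              rw [if_pos rfl, hsub, DirectSum.decompose_of_mem_same 𝒜 (SetLike.coe_mem _),
                sub_self]
            · rw [if_neg hj, hsub,
                DirectSum.decompose_of_mem_ne 𝒜 (SetLike.coe_mem
                  (DirectSum.decompose 𝒜 a na)) (Ne.symm hj), sub_zero]
          by_cases ha' : a' = 0
          · refine ⟨nr, (DirectSum.decompose 𝒜 r nr : R), SetLike.coe_mem _, hr_top_ne, ?_, ?_⟩
            · intro i
              by_cases hi : i = na
              · subst hi
                exact htop
              · have h : (DirectSum.decompose 𝒜 a i : R) = 0 := by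
                  have h := hproj_a' i
                  rw [ha', if_neg hi] at h
                  simpa using h.symm
                rw [h, zero_mul]
            · intro n z hz hzr
              rw [mul_decompose_coe 𝒜 hz, hzr]
              simp
          · have hsubset : (DirectSum.decompose 𝒜 a').support
                ⊆ (DirectSum.decompose 𝒜 a).support.erase na := by
              intro j hj
              have hne := DFinsupp.mem_support_iff.mp hj
              rw [Finset.mem_erase]
              by_cases hjna : j = na
              · exfalso
                apply hne
                have h := hproj_a' j
                rw [if_pos hjna] at h
                exact Subtype.ext h
              · refine ⟨hjna, DFinsupp.mem_support_iff.mpr fun h0 => hne ?_⟩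
                have h := hproj_a' j
                rw [if_neg hjna] at h
                apply Subtype.ext
                rw [h, h0]
            have hcard' : (DirectSum.decompose 𝒜 a').support.card
                + (DirectSum.decompose 𝒜 r).support.card ≤ N := by
              have h1 := Finset.card_le_card hsubset
              have h2 := Finset.card_erase_of_mem hna_mem
              have h3 : 1 ≤ (DirectSum.decompose 𝒜 a).support.card :=
                Finset.card_pos.mpr ⟨na, hna_mem⟩
              omega
            obtain ⟨e, ρ, hρm, hρne, hρa', hρr⟩ := ih a' r hcard' ha'r hr
            refine ⟨e, ρ, hρm, hρne, ?_, hρr⟩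
            intro i
            by_cases hi : i = na
            · subst hi
              exact hρr na _ (SetLike.coe_mem _) hatr
            · have h := hρa' i
              rwa [hproj_a' i, if_neg hi] at h
        · -- r' := a_top * r ≠ 0 : shrink r
          set r' := (DirectSum.decompose 𝒜 a na : R) * r with hr'def
          have hmul' : a * r' = 0 := by
            rw [hr'def, mul_left_comm, hmul, mul_zero]
          have hexp : r' = ∑ i ∈ (DirectSum.decompose 𝒜 r).support,
              (DirectSum.decompose 𝒜 a na : R) * (DirectSum.decompose 𝒜 r i : R) := by
            rw [hr'def, ← Finset.mul_sum, DirectSum.sum_support_decompose]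
          have hsubset : (DirectSum.decompose 𝒜 r').support
              ⊆ ((DirectSum.decompose 𝒜 r).support.erase nr).image (na + ·) := by
            intro j hj
            have hne' := DFinsupp.mem_support_iff.mp hj
            have hne : (DirectSum.decompose 𝒜 r' j : R) ≠ 0 := by simpa using hne'
            have hjna : na ≤ j := by
              by_contra hlt
              apply hne
              rw [hexp, decompose_coe_sum, Finset.sum_eq_zero]
              intro i _
              rw [DirectSum.decompose_of_mem_ne 𝒜
                (SetLike.mul_mem_graded (SetLike.coe_mem _) (SetLike.coe_mem _)) (by omega)]
            have hji : j = na + (j - na) := by omega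
            have hval : (DirectSum.decompose 𝒜 r' j : R)
                = (DirectSum.decompose 𝒜 a na : R) * (DirectSum.decompose 𝒜 r (j - na) : R) := by
              conv_lhs => rw [hji]
              rw [hr'def, ← mul_decompose_coe 𝒜 (SetLike.coe_mem _)]
            have hine : j - na ≠ nr := by
              intro hinr
              apply hne
              rw [hval, hinr, htop]
            refine Finset.mem_image.mpr ⟨j - na, Finset.mem_erase.mpr ⟨hine, ?_⟩, hji.symm⟩
            refine DFinsupp.mem_support_iff.mpr fun h0 => hne ?_
            rw [hval, h0]
            simp
          have hr'ne : r' ≠ 0 := hatr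
          have hcard' : (DirectSum.decompose 𝒜 a).support.card
              + (DirectSum.decompose 𝒜 r').support.card ≤ N := by
            have h1 := Finset.card_le_card hsubset
            have h2 := Finset.card_image_le (s := (DirectSum.decompose 𝒜 r).support.erase nr)
              (f := (na + ·))
            have h3 := Finset.card_erase_of_mem hnr_mem
            have h4 : 1 ≤ (DirectSum.decompose 𝒜 r).support.card :=
              Finset.card_pos.mpr ⟨nr, hnr_mem⟩
            omega
          obtain ⟨e, ρ, hρm, hρne, hρa, hρr'⟩ := ih a r' hcard' hmul' hr'ne
          refine ⟨e, ρ, hρm, hρne, hρa, ?_⟩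
          intro n z hz hzr
          refine hρr' n z hz ?_
          rw [hr'def, mul_left_comm, hzr, mul_zero]

open scoped Classical in
/-- Graded McCoy: a zero divisor in a graded ring is killed by a nonzero homogeneous element. -/
lemma mccoy (a r : R) (hmul : a * r = 0) (hr : r ≠ 0) :
    ∃ (e : ℕ) (ρ : R), ρ ∈ 𝒜 e ∧ ρ ≠ 0 ∧ a * ρ = 0 := by
  obtain ⟨e, ρ, h1, h2, h3, -⟩ := mccoy_aux 𝒜
    ((DirectSum.decompose 𝒜 a).support.card + (DirectSum.decompose 𝒜 r).support.card)
    a r le_rfl hmul hr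
  refine ⟨e, ρ, h1, h2, ?_⟩
  calc a * ρ = (∑ i ∈ (DirectSum.decompose 𝒜 a).support, (DirectSum.decompose 𝒜 a i : R)) * ρ := by
        rw [DirectSum.sum_support_decompose]
    _ = ∑ i ∈ (DirectSum.decompose 𝒜 a).support, (DirectSum.decompose 𝒜 a i : R) * ρ :=
        Finset.sum_mul _ _ _
    _ = 0 := Finset.sum_eq_zero fun i _ => h3 i

end McCoy
section PolyAux

variable {k : Type*} [Field k] {R : Type*} [CommRing R] [Algebra k R]
variable (𝒜 : ℕ → Submodule k R) [GradedAlgebra 𝒜]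
variable {m : ℕ}

lemma degree_of_mem_support {p : MvPolynomial (Fin (m + 1)) k} {n : ℕ}
    (hp : p.IsHomogeneous n) {α : Fin (m + 1) →₀ ℕ} (hα : α ∈ p.support) :
    ∑ i ∈ α.support, α i = n := by
  by_contra h
  exact MvPolynomial.mem_support_iff.mp hα (hp.coeff_eq_zero h)

lemma prod_pow_mem {d : ℕ} {f : Fin (m + 1) → R} (hf : ∀ j, f j ∈ 𝒜 d)
    (α : Fin (m + 1) →₀ ℕ) (s : Finset (Fin (m + 1))) :
    (∏ i ∈ s, f i ^ α i) ∈ 𝒜 ((∑ i ∈ s, α i) * d) := by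
  classical
  induction s using Finset.cons_induction with
  | empty => simpa using SetLike.one_mem_graded 𝒜
  | cons a s ha ih =>
      rw [Finset.prod_cons, Finset.sum_cons, add_mul]
      exact SetLike.mul_mem_graded
        (by simpa [smul_eq_mul] using SetLike.pow_mem_graded (α a) (hf a)) ih

/-- Evaluation of a homogeneous polynomial of degree `n` at forms of degree `d`
lands in degree `n * d`. -/
lemma aeval_homog_mem_s7 {d n : ℕ} {f : Fin (m + 1) → R} (hf : ∀ j, f j ∈ 𝒜 d)
    {p : MvPolynomial (Fin (m + 1)) k} (hp : p.IsHomogeneous n) :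
    MvPolynomial.aeval f p ∈ 𝒜 (n * d) := by
  rw [MvPolynomial.aeval_def, MvPolynomial.eval₂_eq]
  apply Submodule.sum_mem
  intro α hα
  have hdeg : ∑ i ∈ α.support, α i = n := degree_of_mem_support hp hα
  have hprod := prod_pow_mem 𝒜 hf α α.support
  rw [hdeg] at hprod
  rw [← Algebra.smul_def]
  exact Submodule.smul_mem _ _ hprod

/-- Transfer identity: for a homogeneous polynomial of degree `n`,
`F ^ n * p(f') = F' ^ n * p(f)` when `F * f' j = F' * f j` for all `j`. -/
lemma aeval_homog_transfer {n : ℕ} {f f' : Fin (m + 1) → R} {F F' : R}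
    (heq : ∀ j, F * f' j = F' * f j)
    {p : MvPolynomial (Fin (m + 1)) k} (hp : p.IsHomogeneous n) :
    F ^ n * MvPolynomial.aeval f' p = F' ^ n * MvPolynomial.aeval f p := by
  rw [MvPolynomial.aeval_def, MvPolynomial.eval₂_eq, MvPolynomial.aeval_def,
    MvPolynomial.eval₂_eq, Finset.mul_sum, Finset.mul_sum]
  apply Finset.sum_congr rfl
  intro α hα
  have hdeg : ∑ i ∈ α.support, α i = n := degree_of_mem_support hp hα
  rw [mul_left_comm, mul_left_comm (F' ^ n)]
  congr 1
  rw [← hdeg, ← Finset.prod_pow_eq_pow_sum, ← Finset.prod_mul_distrib,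
    ← Finset.prod_pow_eq_pow_sum, ← Finset.prod_mul_distrib]
  exact Finset.prod_congr rfl fun i _ => by rw [← mul_pow, ← mul_pow, heq i]

/-- Key transfer: if `d > 0` and `p(f) = 0`, then `p(f') = 0`. -/
lemma aeval_transfer {d : ℕ} (hd : 0 < d) {f f' : Fin (m + 1) → R} {F F' : R}
    (hf : ∀ j, f j ∈ 𝒜 d) (hFreg : F ∈ nonZeroDivisors R)
    (heq : ∀ j, F * f' j = F' * f j)
    (g : MvPolynomial (Fin (m + 1)) k) (hg : MvPolynomial.aeval f g = 0) :
    MvPolynomial.aeval f' g = 0 := by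
  have hsum : ∑ c ∈ Finset.range (g.totalDegree + 1),
      MvPolynomial.aeval f (MvPolynomial.homogeneousComponent c g) = 0 := by
    rw [← map_sum, MvPolynomial.sum_homogeneousComponent, hg]
  have hcomp : ∀ c ∈ Finset.range (g.totalDegree + 1),
      MvPolynomial.aeval f (MvPolynomial.homogeneousComponent c g) = 0 := by
    refine comp_eq_zero_of_sum_eq_zero 𝒜 (g := fun c => c * d)
      (fun c _ => aeval_homog_mem_s7 𝒜 hf (MvPolynomial.homogeneousComponent_isHomogeneous c g))
      ?_ hsum
    intro x _ y _ hxy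
    exact Nat.eq_of_mul_eq_mul_right hd hxy
  have hcomp' : ∀ c ∈ Finset.range (g.totalDegree + 1),
      MvPolynomial.aeval f' (MvPolynomial.homogeneousComponent c g) = 0 := by
    intro c hc
    have h2 := aeval_homog_transfer (k := k) heq
      (MvPolynomial.homogeneousComponent_isHomogeneous c g) (f := f) (f' := f')
    have h3 : MvPolynomial.aeval f' (MvPolynomial.homogeneousComponent c g) * F ^ c = 0 := by
      rw [mul_comm, h2, hcomp c hc, mul_zero]
    exact mem_nonZeroDivisors_iff_right.mp (pow_mem hFreg c) _ h3
  conv_lhs => rw [← MvPolynomial.sum_homogeneousComponent g]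
  rw [map_sum]
  exact Finset.sum_eq_zero hcomp'

/-- Evaluation at scalar multiples of a single element. -/
lemma aeval_smul_homog {u : R} {c : Fin (m + 1) → k} {n : ℕ}
    {p : MvPolynomial (Fin (m + 1)) k} (hp : p.IsHomogeneous n) :
    MvPolynomial.aeval (fun j => c j • u) p = MvPolynomial.eval c p • u ^ n := by
  rw [MvPolynomial.aeval_def, MvPolynomial.eval₂_eq, MvPolynomial.eval_eq, Finset.sum_smul]
  apply Finset.sum_congr rfl
  intro α hα
  have hdeg : ∑ i ∈ α.support, α i = n := degree_of_mem_support hp hα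
  have hpr0 : ∀ s : Finset (Fin (m + 1)),
      (∏ i ∈ s, (c i • u) ^ α i) = (∏ i ∈ s, c i ^ α i) • ∏ i ∈ s, u ^ α i := by
    intro s
    induction s using Finset.cons_induction with
    | empty => simp
    | cons a s ha ih => rw [Finset.prod_cons, Finset.prod_cons, Finset.prod_cons, ih,
        smul_pow, smul_mul_smul_comm]
  have hpr : (∏ i ∈ α.support, (c i • u) ^ α i)
      = (∏ i ∈ α.support, c i ^ α i) • u ^ n := by
    rw [← hdeg, ← Finset.prod_pow_eq_pow_sum, hpr0]
  rw [hpr, ← Algebra.smul_def, smul_smul]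

end PolyAux
section GradeZero

variable {k : Type*} [Field k] {R : Type*} [CommRing R] [Algebra k R]
variable (𝒜 : ℕ → Submodule k R) [GradedAlgebra 𝒜]

lemma algebraMap_mem_grade_zero (c : k) : algebraMap k R c ∈ 𝒜 0 := by
  rw [Algebra.algebraMap_eq_smul_one]
  exact Submodule.smul_mem _ _ (SetLike.one_mem_graded 𝒜)

/-- In a standard graded algebra, the degree-zero part consists of scalars. -/
lemma grade_zero_of_std (hstd : Algebra.adjoin k (𝒜 1 : Set R) = ⊤) :
    ∀ x ∈ 𝒜 0, ∃ c : k, algebraMap k R c = x := by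
  intro x hx
  have hπ : ∀ y : R, GradedRing.projZeroRingHom 𝒜 y = (DirectSum.decompose 𝒜 y 0 : R) :=
    fun _ => rfl
  have key : ∀ (y : R) (_ : y ∈ Algebra.adjoin k ((𝒜 1 : Submodule k R) : Set R)),
      GradedRing.projZeroRingHom 𝒜 y ∈ Set.range (algebraMap k R) := by
    intro y hy
    induction hy using Algebra.adjoin_induction with
    | mem z hz =>
        refine ⟨0, ?_⟩
        rw [map_zero, hπ, DirectSum.decompose_of_mem_ne 𝒜 hz one_ne_zero]
    | algebraMap c =>
        refine ⟨c, ?_⟩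
        rw [hπ, DirectSum.decompose_of_mem_same 𝒜 (algebraMap_mem_grade_zero 𝒜 c)]
    | add u v hu hv ihu ihv =>
        obtain ⟨cu, hcu⟩ := ihu
        obtain ⟨cv, hcv⟩ := ihv
        exact ⟨cu + cv, by rw [map_add, map_add, hcu, hcv]⟩
    | mul u v hu hv ihu ihv =>
        obtain ⟨cu, hcu⟩ := ihu
        obtain ⟨cv, hcv⟩ := ihv
        exact ⟨cu * cv, by rw [map_mul, map_mul, hcu, hcv]⟩
  have hxadj : x ∈ Algebra.adjoin k ((𝒜 1 : Submodule k R) : Set R) := by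
    rw [hstd]; trivial
  obtain ⟨c, hc⟩ := key x hxadj
  refine ⟨c, ?_⟩
  rwa [hπ, DirectSum.decompose_of_mem_same 𝒜 hx] at hc

end GradeZero
section MainAux

variable {k : Type*} [Field k] {R : Type*} [CommRing R] [Algebra k R] [Nontrivial R]
variable (𝒜 : ℕ → Submodule k R) [GradedAlgebra 𝒜]

lemma rational_datum_transfer
    (hstd : Algebra.adjoin k (𝒜 1 : Set R) = ⊤)
    {m d d' : ℕ} {f f' : Fin (m + 1) → R}
    (hf : ∀ j, f j ∈ 𝒜 d) (hf' : ∀ j, f' j ∈ 𝒜 d')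
    {F F' : R}
    (hFreg : F ∈ nonZeroDivisors R) (hF'reg : F' ∈ nonZeroDivisors R)
    (heq : ∀ j, F * f' j = F' * f j)
    (h : TorsionFreeOverSub (Algebra.adjoin k (Set.range f)) ∧
        ∃ G ∈ Ideal.span (Set.range f), G ∈ nonZeroDivisors R) :
    TorsionFreeOverSub (Algebra.adjoin k (Set.range f')) ∧
        ∃ G ∈ Ideal.span (Set.range f'), G ∈ nonZeroDivisors R := by
  obtain ⟨hT, G, hG, hGreg⟩ := h
  constructor
  · -- torsionfree part
    by_cases hd' : d' = 0
    · -- all the f' are scalars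
      subst hd'
      have hbot : Algebra.adjoin k (Set.range f') ≤ ⊥ := by
        rw [Algebra.adjoin_le_iff]
        rintro _ ⟨j, rfl⟩
        obtain ⟨c, hc⟩ := grade_zero_of_std 𝒜 hstd _ (hf' j)
        exact (Algebra.mem_bot).mpr ⟨c, hc⟩
      intro a ha r har
      obtain ⟨c, hc⟩ := (Algebra.mem_bot).mp (hbot a.2)
      by_cases hc0 : c = 0
      · exfalso
        have h10 : (1 : Algebra.adjoin k (Set.range f')) * a = 0 := by
          apply Subtype.ext
          push_cast
          rw [one_mul, ← hc, hc0, map_zero]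
        have h1 := mem_nonZeroDivisors_iff_right.mp ha 1 h10
        exact one_ne_zero (α := R) (by simpa using congrArg Subtype.val h1)
      · have hcr : c • r = 0 := by rw [Algebra.smul_def, hc, har]
        calc r = c⁻¹ • (c • r) := by rw [smul_smul, inv_mul_cancel₀ hc0, one_smul]
        _ = 0 := by rw [hcr, smul_zero]
    · have hd'pos : 0 < d' := Nat.pos_of_ne_zero hd'
      by_cases hd : d = 0
      · -- the f are scalars; then f' is a tuple of scalar multiples of one regular element
        subst hd
        have hcf : ∀ j, ∃ c : k, algebraMap k R c = f j := fun j =>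
          grade_zero_of_std 𝒜 hstd _ (hf j)
        choose c hc using hcf
        have hj0 : ∃ j₀, c j₀ ≠ 0 := by
          by_contra hall
          push_neg at hall
          have hf0 : ∀ j, f j = 0 := fun j => by rw [← hc j, hall j, map_zero]
          have hG0 : G = 0 := by
            have hle : Ideal.span (Set.range f) ≤ ⊥ := by
              rw [Ideal.span_le]
              rintro _ ⟨j, rfl⟩
              simp [hf0 j]
            simpa using hle hG
          exact one_ne_zero (α := R)
            (mem_nonZeroDivisors_iff_right.mp hGreg 1 (by rw [one_mul, hG0]))
        obtain ⟨j₀, hj₀⟩ := hj0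
        set u := (c j₀)⁻¹ • f' j₀ with hu_def
        have hu_mem : u ∈ 𝒜 d' := Submodule.smul_mem _ _ (hf' j₀)
        have hFu : F * u = F' := by
          rw [hu_def, mul_smul_comm, heq j₀, ← hc j₀, mul_comm F', ← Algebra.smul_def,
            smul_smul, inv_mul_cancel₀ hj₀, one_smul]
        have hf'u : ∀ j, f' j = c j • u := by
          intro j
          have h1 : F * f' j = F * (c j • u) := by
            rw [heq j, mul_smul_comm, hFu, ← hc j, mul_comm F', ← Algebra.smul_def]
          have h2 := mem_nonZeroDivisors_iff_right.mp hFreg (f' j - c j • u)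
            (by rw [sub_mul, mul_comm (f' j) F, mul_comm (c j • u) F, h1, sub_self])
          exact sub_eq_zero.mp h2
        have hureg : u ∈ nonZeroDivisors R := by
          rw [mem_nonZeroDivisors_iff_right]
          intro x hx
          apply mem_nonZeroDivisors_iff_right.mp hF'reg
          rw [← hFu, ← mul_assoc, mul_comm x F, mul_assoc, hx, mul_zero]
        intro a ha r har
        by_contra hrne
        obtain ⟨e, ρ, hρmem, hρne, hρ⟩ := mccoy 𝒜 (a : R) r har hrne
        obtain ⟨q, hq⟩ : ∃ q : MvPolynomial (Fin (m + 1)) k,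
            MvPolynomial.aeval f' q = (a : R) := by
          have h2 : (a : R) ∈ (MvPolynomial.aeval f' :
              MvPolynomial (Fin (m + 1)) k →ₐ[k] R).range := by
            rw [← Algebra.adjoin_range_eq_range_aeval]
            exact a.2
          exact h2
        have hq' : MvPolynomial.aeval (fun j => c j • u) q = (a : R) := by
          have hfe : (fun j => c j • u) = f' := funext fun j => (hf'u j).symm
          rw [hfe, hq]
        have hsum : ∑ n ∈ Finset.range (q.totalDegree + 1),
            (MvPolynomial.eval c (MvPolynomial.homogeneousComponent n q) • u ^ n) * ρ = 0 := by
          have hsa : ∑ n ∈ Finset.range (q.totalDegree + 1),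
              MvPolynomial.eval c (MvPolynomial.homogeneousComponent n q) • u ^ n = (a : R) := by
            rw [← hq']
            conv_rhs => rw [← MvPolynomial.sum_homogeneousComponent q]
            rw [map_sum]
            exact Finset.sum_congr rfl fun n _ =>
              (aeval_smul_homog (MvPolynomial.homogeneousComponent_isHomogeneous n q)).symm
          rw [← Finset.sum_mul, hsa, hρ]
        have hcomp : ∀ n ∈ Finset.range (q.totalDegree + 1),
            (MvPolynomial.eval c (MvPolynomial.homogeneousComponent n q) • u ^ n) * ρ = 0 := by
          refine comp_eq_zero_of_sum_eq_zero 𝒜 (g := fun n => n * d' + e)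
            (fun n _ => SetLike.mul_mem_graded (Submodule.smul_mem _ _
              (by simpa [smul_eq_mul] using SetLike.pow_mem_graded n hu_mem)) hρmem)
            ?_ hsum
          intro x _ y _ hxy
          exact Nat.eq_of_mul_eq_mul_right hd'pos (Nat.add_right_cancel hxy)
        by_cases hκ : ∀ n ∈ Finset.range (q.totalDegree + 1),
            MvPolynomial.eval c (MvPolynomial.homogeneousComponent n q) = 0
        · have ha0 : (a : R) = 0 := by
            rw [← hq']
            conv_lhs => rw [← MvPolynomial.sum_homogeneousComponent q]
            rw [map_sum]
            refine Finset.sum_eq_zero fun n hn => ?_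
            rw [aeval_smul_homog (MvPolynomial.homogeneousComponent_isHomogeneous n q),
              hκ n hn, zero_smul]
          have h10 : (1 : Algebra.adjoin k (Set.range f')) * a = 0 := by
            apply Subtype.ext
            push_cast
            rw [one_mul, ha0]
          have h1 := mem_nonZeroDivisors_iff_right.mp ha 1 h10
          exact hrne (absurd (show (1 : R) = 0 by simpa using congrArg Subtype.val h1)
            one_ne_zero)
        · push_neg at hκ
          obtain ⟨n, hn, hκn⟩ := hκ
          have h1 := hcomp n hn
          have h2 : u ^ n * ρ = 0 := by
            have h3 : MvPolynomial.eval c (MvPolynomial.homogeneousComponent n q)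
                • (u ^ n * ρ) = 0 := by
              rw [← smul_mul_assoc]
              exact h1
            have h4 := congrArg
              (fun y => (MvPolynomial.eval c (MvPolynomial.homogeneousComponent n q))⁻¹ • y) h3
            simpa [smul_smul, inv_mul_cancel₀ hκn] using h4
          exact hρne (mem_nonZeroDivisors_iff_right.mp (pow_mem hureg n) ρ
            (by rw [mul_comm]; exact h2))
      · -- the main case: both degrees positive
        have hdpos : 0 < d := Nat.pos_of_ne_zero hd
        intro a ha r har
        obtain ⟨q, hq⟩ : ∃ q : MvPolynomial (Fin (m + 1)) k,
            MvPolynomial.aeval f' q = (a : R) := by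
          have h2 : (a : R) ∈ (MvPolynomial.aeval f' :
              MvPolynomial (Fin (m + 1)) k →ₐ[k] R).range := by
            rw [← Algebra.adjoin_range_eq_range_aeval]
            exact a.2
          exact h2
        have hbA : MvPolynomial.aeval f q ∈ Algebra.adjoin k (Set.range f) := by
          rw [Algebra.adjoin_range_eq_range_aeval]
          exact ⟨q, rfl⟩
        have hbreg : (⟨MvPolynomial.aeval f q, hbA⟩ : Algebra.adjoin k (Set.range f)) ∈
            nonZeroDivisors (Algebra.adjoin k (Set.range f)) := by
          rw [mem_nonZeroDivisors_iff_right]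
          intro z hz
          obtain ⟨p, hp⟩ : ∃ p : MvPolynomial (Fin (m + 1)) k,
              MvPolynomial.aeval f p = (z : R) := by
            have h2 : (z : R) ∈ (MvPolynomial.aeval f :
                MvPolynomial (Fin (m + 1)) k →ₐ[k] R).range := by
              rw [← Algebra.adjoin_range_eq_range_aeval]
              exact z.2
            exact h2
          have h1 : MvPolynomial.aeval f (p * q) = 0 := by
            have h1' : (z : R) * MvPolynomial.aeval f q = 0 := by
              simpa using congrArg Subtype.val hz
            rw [map_mul, hp]
            exact h1'
          have h2 : MvPolynomial.aeval f' (p * q) = 0 :=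
            aeval_transfer 𝒜 hdpos hf hFreg heq _ h1
          have h3 : MvPolynomial.aeval f' p * (a : R) = 0 := by
            rw [← hq, ← map_mul]
            exact h2
          have hpA' : MvPolynomial.aeval f' p ∈ Algebra.adjoin k (Set.range f') := by
            rw [Algebra.adjoin_range_eq_range_aeval]
            exact ⟨p, rfl⟩
          have h4 : (⟨MvPolynomial.aeval f' p, hpA'⟩ : Algebra.adjoin k (Set.range f')) * a
              = 0 := by
            apply Subtype.ext
            push_cast
            exact h3
          have h5 := mem_nonZeroDivisors_iff_right.mp ha _ h4
          have h6 : MvPolynomial.aeval f' p = 0 := by simpa using congrArg Subtype.val h5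
          have h7 : MvPolynomial.aeval f p = 0 :=
            aeval_transfer 𝒜 hd'pos hf' hF'reg (fun j => (heq j).symm) _ h6
          apply Subtype.ext
          rw [hp] at h7
          simpa using h7
        by_contra hrne
        obtain ⟨e, ρ, hρmem, hρne, hρ⟩ := mccoy 𝒜 (a : R) r har hrne
        have hsum : ∑ n ∈ Finset.range (q.totalDegree + 1),
            MvPolynomial.aeval f' (MvPolynomial.homogeneousComponent n q) * ρ = 0 := by
          rw [← Finset.sum_mul, ← map_sum, MvPolynomial.sum_homogeneousComponent, hq, hρ]
        have hcomp : ∀ n ∈ Finset.range (q.totalDegree + 1),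
            MvPolynomial.aeval f' (MvPolynomial.homogeneousComponent n q) * ρ = 0 := by
          refine comp_eq_zero_of_sum_eq_zero 𝒜 (g := fun n => n * d' + e)
            (fun n _ => SetLike.mul_mem_graded
              (aeval_homog_mem_s7 𝒜 hf' (MvPolynomial.homogeneousComponent_isHomogeneous n q))
              hρmem)
            ?_ hsum
          intro x _ y _ hxy
          exact Nat.eq_of_mul_eq_mul_right hd'pos (Nat.add_right_cancel hxy)
        have hbcomp : ∀ n ∈ Finset.range (q.totalDegree + 1),
            MvPolynomial.aeval f (MvPolynomial.homogeneousComponent n q) * ρ = 0 := by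
          intro n hn
          have hid := aeval_homog_transfer (k := k) (f := f) (f' := f') heq
            (MvPolynomial.homogeneousComponent_isHomogeneous n q)
          have h5 : (MvPolynomial.aeval f (MvPolynomial.homogeneousComponent n q) * ρ)
              * F' ^ n = 0 := by
            calc (MvPolynomial.aeval f (MvPolynomial.homogeneousComponent n q) * ρ) * F' ^ n
                = F' ^ n * MvPolynomial.aeval f (MvPolynomial.homogeneousComponent n q) * ρ := by
                  ring
              _ = F ^ n * MvPolynomial.aeval f' (MvPolynomial.homogeneousComponent n q) * ρ := by
                  rw [hid]
              _ = F ^ n * (MvPolynomial.aeval f' (MvPolynomial.homogeneousComponent n q) * ρ) := by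
                  ring
              _ = 0 := by rw [hcomp n hn, mul_zero]
          exact mem_nonZeroDivisors_iff_right.mp (pow_mem hF'reg n) _ h5
        have hbρ : MvPolynomial.aeval f q * ρ = 0 := by
          conv_lhs => rw [← MvPolynomial.sum_homogeneousComponent q]
          rw [map_sum, Finset.sum_mul]
          exact Finset.sum_eq_zero hbcomp
        exact hρne (hT _ hbreg ρ hbρ)
  · -- ideal part
    obtain ⟨c, hc⟩ := (Ideal.mem_span_range_iff_exists_fun).mp hG
    refine ⟨F' * G, ?_, mul_mem hF'reg hGreg⟩
    rw [Ideal.mem_span_range_iff_exists_fun]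
    refine ⟨fun j => c j * F, ?_⟩
    rw [← hc, Finset.mul_sum]
    exact Finset.sum_congr rfl fun j _ => by rw [mul_assoc, heq j, mul_left_comm]

end MainAux

/-- **Stability of rational data under equivalence.** Let `R` be a reduced standard graded
`k`-algebra of positive dimension and `f`, `f'` equivalent tuples of forms (of degrees `d`,
`d'`), i.e. `F * f' j = F' * f j` for homogeneous regular elements `F, F'` of `R`.  Then `f`
satisfies the conditions of a rational datum (namely `R` is torsionfree over `k[f]` and the
ideal `(f)` contains a regular element, equivalently is not contained in any minimal prime of
the reduced ring `R`) if and only if `f'` does. -/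
theorem rational_datum_stable_under_equivalence
    (k : Type*) [Field k]
    (R : Type*) [CommRing R] [Algebra k R] [IsReduced R] [Nontrivial R]
    (𝒜 : ℕ → Submodule k R) [GradedAlgebra 𝒜]
    (hstd : Algebra.adjoin k (𝒜 1 : Set R) = ⊤)
    (m : ℕ) (d d' : ℕ) (f f' : Fin (m + 1) → R)
    (hf : ∀ j, f j ∈ 𝒜 d) (hf' : ∀ j, f' j ∈ 𝒜 d')
    (F F' : R) (dF dF' : ℕ) (hF : F ∈ 𝒜 dF) (hF' : F' ∈ 𝒜 dF')
    (hFreg : F ∈ nonZeroDivisors R) (hF'reg : F' ∈ nonZeroDivisors R)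
    (heq : ∀ j, F * f' j = F' * f j) :
    ((TorsionFreeOverSub (Algebra.adjoin k (Set.range f)) ∧
        ∃ G ∈ Ideal.span (Set.range f), G ∈ nonZeroDivisors R)
      ↔ (TorsionFreeOverSub (Algebra.adjoin k (Set.range f')) ∧
        ∃ G ∈ Ideal.span (Set.range f'), G ∈ nonZeroDivisors R)) :=
  ⟨rational_datum_transfer 𝒜 hstd hf hf' hFreg hF'reg heq,
    rational_datum_transfer 𝒜 hstd hf' hf hF'reg hFreg (fun j => (heq j).symm)⟩
end

section
/- Let R be a reduced standard graded k-algebra, f a rational datum on R with image algebra S ≅ k[f], and φ ⊂ S a minimal prime of S ≅ k[f]. Then there exists a minimal prime P of R such that P ∩ k[f] = φ under the inclusion k[f] ⊂ R; i.e., the contraction map Min(R) → Min(k[f]) is surjective. -/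
lemma aux_min_prime_contraction
    {k : Type*} [Field k] {R : Type*} [CommRing R] [Algebra k R]
    [IsReduced R] [IsNoetherianRing R]
    (A : Subalgebra k R) (φ : Ideal A) (hφ : φ ∈ minimalPrimes A) :
    ∃ P ∈ minimalPrimes R, Ideal.comap A.val.toRingHom P = φ := by
  have hφp : φ.IsPrime := hφ.1.1
  suffices h : ∃ P ∈ minimalPrimes R, Ideal.comap A.val.toRingHom P ≤ φ by
    obtain ⟨P, hP, hle⟩ := h
    haveI : P.IsPrime := hP.1.1
    refine ⟨P, hP, le_antisymm hle (hφ.2 ⟨Ideal.comap_isPrime _ _, bot_le⟩ hle)⟩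
  by_contra hcon
  push_neg at hcon
  have hfin : (minimalPrimes R).Finite := minimalPrimes.finite_of_isNoetherianRing R
  choose a ha hna using fun (P : minimalPrimes R) =>
    Set.not_subset.mp
      (fun h => (hcon P.1 P.2 h).elim : ¬(Ideal.comap A.val.toRingHom P.1 : Set A) ⊆ φ)
  haveI : Fintype (minimalPrimes R) := hfin.fintype
  set b : A := ∏ P : minimalPrimes R, a P with hb
  have hbP : ∀ P : minimalPrimes R, (b : R) ∈ P.1 := by
    intro P
    haveI : P.1.IsPrime := P.2.1.1
    have : b ∈ Ideal.comap A.val.toRingHom P.1 :=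
      Ideal.IsPrime.prod_mem_iff.mpr ⟨P, Finset.mem_univ P, ha P⟩
    exact this
  have hb0 : (b : R) = 0 := by
    have hnil : (b : R) ∈ nilradical R := by
      rw [nilradical_eq_sInf]
      refine Ideal.mem_sInf.mpr fun {J} hJ => ?_
      haveI : J.IsPrime := hJ
      obtain ⟨p, hp, hple⟩ := Ideal.exists_minimalPrimes_le (I := (⊥ : Ideal R)) (J := J) bot_le
      exact hple (hbP ⟨p, hp⟩)
    rw [nilradical_eq_zero] at hnil
    simpa using hnil
  have hbz : b = 0 := Subtype.ext hb0
  have hnφ : b ∉ φ := by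
    rw [hb]
    intro hmem
    obtain ⟨P, _, hP⟩ := Ideal.IsPrime.prod_mem_iff.mp hmem
    exact hna P hP
  exact hnφ (hbz ▸ φ.zero_mem)

/-- Let `R` be a reduced standard graded `k`-algebra and `f` a rational datum on `R` of
degree `d ≥ 1` (so `R` is torsionfree over `k[f]` and the ideal `(f)` contains a regular
element of `k[f]`).  Then every minimal prime `φ` of `k[f]` is the contraction of a minimal
prime of `R`: the contraction map `Min(R) → Min(k[f])` is surjective. -/
theorem contraction_of_minimal_primes_surjective
    (k : Type*) [Field k]
    (R : Type*) [CommRing R] [Algebra k R] [IsReduced R] [IsNoetherianRing R]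
    (𝒜 : ℕ → Submodule k R) [GradedAlgebra 𝒜]
    (hstd : Algebra.adjoin k (𝒜 1 : Set R) = ⊤)
    (m : ℕ) (d : ℕ) (hd : 1 ≤ d)
    (f : Fin (m + 1) → R) (hf : ∀ j, f j ∈ 𝒜 d)
    (htf : TorsionFreeOverSub (Algebra.adjoin k (Set.range f)))
    (hreg : ∃ F : Algebra.adjoin k (Set.range f),
      (F : R) ∈ Ideal.span (Set.range f) ∧ F ∈ nonZeroDivisors (Algebra.adjoin k (Set.range f)))
    (φ : Ideal (Algebra.adjoin k (Set.range f)))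
    (hφ : φ ∈ minimalPrimes (Algebra.adjoin k (Set.range f))) :
    ∃ P ∈ minimalPrimes R,
      Ideal.comap (Algebra.adjoin k (Set.range f)).val.toRingHom P = φ :=
  aux_min_prime_contraction _ φ hφ
end

section
/- Let R be a reduced standard graded k-algebra and f a rational datum on R defining a rational map 𝔉 with image algebra S ≅ k[f]. If 𝔉 is birational onto its image, i.e., there exists a rational datum g on S with g(f) equivalent to the identity datum (x₀,…,xₙ) on R, then for every minimal prime P of R the restricted map 𝔉|_P : Proj(R/P) ⇢ Proj(k[f]/(P ∩ k[f])) is birational onto its image. -/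
lemma not_mem_minimalPrime_of_nonZeroDivisor {R : Type*} [CommRing R]
    {P : Ideal R} (hP : P ∈ minimalPrimes R) {H : R} (hHreg : H ∈ nonZeroDivisors R) :
    H ∉ P := by
  haveI : P.IsPrime := hP.1.1
  intro hHP
  have h1 : (algebraMap R (Localization P.primeCompl)) H ∈
      IsLocalRing.maximalIdeal (Localization P.primeCompl) :=
    (IsLocalization.AtPrime.to_map_mem_maximal_iff _ P H).mpr hHP
  have h2 : IsNilpotent ((algebraMap R (Localization P.primeCompl)) H) :=
    absurd hHreg (notMem_nonZeroDivisors_of_mem_mem_minimalPrimes hHP hP)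
  obtain ⟨nn, hn⟩ := h2
  rw [← map_pow] at hn
  rw [IsLocalization.map_eq_zero_iff P.primeCompl] at hn
  obtain ⟨s, hs⟩ := hn
  have : (s : R) = 0 := mem_nonZeroDivisors_iff_right.mp (pow_mem hHreg nn) s hs
  exact s.2 (this ▸ P.zero_mem)


/-- Let `R = k[x 0, …, x n]` be a reduced standard graded `k`-algebra (with the `x i` linear
forms generating `R`) and `f` a rational datum of degree `d` on `R` defining a rational map
`𝔉` with image `S = k[f]`.  Suppose `𝔉` is birational onto its image: there is a rational
datum `g` on `S`, given by homogeneous polynomials `G ℓ` of degree `e` in the `f j`, whose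
composite `g(f)` is equivalent to the identity datum `(x 0, …, x n)`, i.e.
`H * gℓ(f) = H' * x ℓ` for homogeneous regular `H, H'`.  Then for every minimal prime `P` of
`R` the restricted rational map on `Proj(R/P)` is birational onto its image: there is an
inverse datum, given by polynomials in the images of the `f j` in `R/P`, whose composite with
the restriction of `f` is equivalent to the identity datum of `R/P`. -/
theorem birational_restricts_to_components
    (k : Type*) [Field k]
    (R : Type*) [CommRing R] [Algebra k R] [IsReduced R] [IsNoetherianRing R]
    (𝒜 : ℕ → Submodule k R) [GradedAlgebra 𝒜]
    (n m : ℕ) (x : Fin (n + 1) → R)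
    (hx : ∀ i, x i ∈ 𝒜 1) (hxgen : Algebra.adjoin k (Set.range x) = ⊤)
    (d : ℕ) (hd : 1 ≤ d)
    (f : Fin (m + 1) → R) (hf : ∀ j, f j ∈ 𝒜 d)
    (htf : TorsionFreeOverSub (Algebra.adjoin k (Set.range f)))
    (hreg : ∃ F ∈ Ideal.span (Set.range f), F ∈ nonZeroDivisors R ∧ ∃ q, F ∈ 𝒜 q)
    -- the inverse datum `g` on `S = k[f]`, given by homogeneous polynomials in the `f j`
    (e : ℕ) (he : 1 ≤ e)
    (G : Fin (n + 1) → MvPolynomial (Fin (m + 1)) k)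
    (hG : ∀ ℓ, (G ℓ).IsHomogeneous e)
    -- `g` is a rational datum on `S`
    (hregS : ∃ F : Algebra.adjoin k (Set.range f),
      (F : R) ∈ Ideal.span (Set.range fun ℓ => MvPolynomial.aeval f (G ℓ)) ∧
      F ∈ nonZeroDivisors (Algebra.adjoin k (Set.range f)))
    (htfS : ∀ b : Algebra.adjoin k (Set.range fun ℓ => MvPolynomial.aeval f (G ℓ)),
      b ∈ nonZeroDivisors (Algebra.adjoin k (Set.range fun ℓ => MvPolynomial.aeval f (G ℓ))) →
      ∀ s : Algebra.adjoin k (Set.range f), (b : R) * (s : R) = 0 → (s : R) = 0)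
    -- the composite `g(f)` is equivalent to the identity datum
    (H H' : R) (dH dH' : ℕ) (hH : H ∈ 𝒜 dH) (hH' : H' ∈ 𝒜 dH')
    (hHreg : H ∈ nonZeroDivisors R) (hH'reg : H' ∈ nonZeroDivisors R)
    (hcomp : ∀ ℓ, H * MvPolynomial.aeval f (G ℓ) = H' * x ℓ) :
    ∀ P ∈ minimalPrimes R,
      ∃ (e' : ℕ) (G' : Fin (n + 1) → MvPolynomial (Fin (m + 1)) k),
        (∀ ℓ, (G' ℓ).IsHomogeneous e') ∧
        ∃ J J' : R ⧸ P, J ∈ nonZeroDivisors (R ⧸ P) ∧ J' ∈ nonZeroDivisors (R ⧸ P) ∧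
          ∀ ℓ, J * MvPolynomial.aeval (fun j => Ideal.Quotient.mk P (f j)) (G' ℓ) =
            J' * Ideal.Quotient.mk P (x ℓ) := by
  intro P hP
  haveI : P.IsPrime := hP.1.1
  refine ⟨e, G, hG, Ideal.Quotient.mk P H, Ideal.Quotient.mk P H', ?_, ?_, ?_⟩
  · exact mem_nonZeroDivisors_of_ne_zero fun h0 =>
      not_mem_minimalPrime_of_nonZeroDivisor hP hHreg ((Ideal.Quotient.eq_zero_iff_mem).mp h0)
  · exact mem_nonZeroDivisors_of_ne_zero fun h0 =>
      not_mem_minimalPrime_of_nonZeroDivisor hP hH'reg ((Ideal.Quotient.eq_zero_iff_mem).mp h0)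
  · intro ℓ
    have := congrArg (Ideal.Quotient.mk P) (hcomp ℓ)
    rw [map_mul, map_mul] at this
    rw [← this]
    congr 1
    exact (MvPolynomial.comp_aeval_apply (f := f) (Ideal.Quotient.mkₐ k P) (G ℓ)).symm
end
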